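/- arXiv:2406.04071 — 5 statements merged into one kernel-verified Lean document; each statement's English description precedes it below -/
import Mathlib

section
/- (Bias bound, Lemma 3.1) Let n ≥ 2, T ≥ 1 and S_T ≥ 0. Let X ∈ ℂ^{nT×n} be obtained by vertically stacking blocks X(1),…,X(T) ∈ ℂ^{n×n} satisfying the quadratic-variation bound ∑_{k=1}^{T−1} ‖X(k) − X(k+1)‖_F² ≤ (2+4n) S_T. Then for every τ with 1 ≤ τ ≤ T, ‖P⊥_{τ,n} X‖_F² ≤ (20n/π²)·(T² S_T/τ²)·1_{τ<T}; in particular the left-hand side is 0 when τ = T. -/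
open scoped BigOperators
open MeasureTheory ProbabilityTheory Matrix

noncomputable section

/-- Squared Frobenius norm of a complex matrix. -/
def frobSq {m k : Type*} [Fintype m] [Fintype k] (X : Matrix m k ℂ) : ℝ :=
  ∑ i, ∑ j, ‖X i j‖ ^ 2

/-- Squared Euclidean norm of a complex vector. -/
def vecNormSq {m : Type*} [Fintype m] (x : m → ℂ) : ℝ := ∑ i, ‖x i‖ ^ 2

/-- Laplacian of the path graph on `T` vertices. -/
def pathLaplacian (T : ℕ) : Matrix (Fin T) (Fin T) ℝ := fun i j =>
  if i = j then
    (if (i : ℕ) = 0 then 0 else 1) + (if (i : ℕ) = T - 1 then 0 else 1)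
  else if (i : ℕ) + 1 = (j : ℕ) ∨ (j : ℕ) + 1 = (i : ℕ) then -1 else 0

/-- `v`, `lam` is an orthonormal eigenbasis of the path-graph Laplacian on `T` vertices,
with the eigenvalues listed in non-increasing order (`lam 0 = λ₁ ≥ ⋯ ≥ λ_T = lam (T-1)`). -/
structure IsPathEigenbasis (T : ℕ) (v : Fin T → Fin T → ℝ) (lam : Fin T → ℝ) : Prop where
  ortho : ∀ i j : Fin T, (∑ t, v i t * v j t) = if i = j then 1 else 0
  eig : ∀ i : Fin T, (pathLaplacian T) *ᵥ (v i) = lam i • (v i)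
  anti : ∀ i j : Fin T, i ≤ j → lam j ≤ lam i

/-- Vertical stacking of the first `T` blocks of a sequence of `n × n` complex matrices. -/
def stackBlocks {n : ℕ} (T : ℕ) (X : ℕ → Matrix (Fin n) (Fin n) ℂ) :
    Matrix (Fin T × Fin n) (Fin n) ℂ :=
  fun q j => X q.1 q.2 j

/-- The projection `P_{τ,n} = (∑_{k=0}^{τ-1} v_{T-k} v_{T-k}ᵀ) ⊗ I_n` (where the paper's
`v_1, …, v_T` correspond to `v 0, …, v (T-1)`) applied columnwise to a stacked matrix. -/
def projStack {T n : ℕ} (v : Fin T → Fin T → ℝ) (τ : ℕ)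
    (X : Matrix (Fin T × Fin n) (Fin n) ℂ) : Matrix (Fin T × Fin n) (Fin n) ℂ :=
  fun q j => ∑ t' : Fin T,
    (((∑ i : Fin T, if T - τ ≤ (i : ℕ) then v i q.1 * v i t' else 0) : ℝ) : ℂ) * X (t', q.2) j

/-- The rank-one matrix `g gᴴ`. -/
def outerH {n : ℕ} (g : Fin n → ℂ) : Matrix (Fin n) (Fin n) ℂ := fun i j => g i * star (g j)

/-- `Ḡ = g gᴴ - I_n`. -/
def GbarM {n : ℕ} (g : Fin n → ℂ) : Matrix (Fin n) (Fin n) ℂ := outerH g - 1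

/-- The AGN noise model: `W 0, …, W (T-1)` are independent Hermitian random matrices
with zero diagonal whose above-diagonal entries are i.i.d. standard complex Gaussians
(real and imaginary parts independent `N(0,1/2)`). -/
def IsAGNNoise {Ω : Type*} [MeasurableSpace Ω] (Pr : Measure Ω) (T n : ℕ)
    (W : ℕ → Ω → Matrix (Fin n) (Fin n) ℂ) : Prop :=
  (∀ k ω, (W k ω).IsHermitian) ∧
  (∀ k ω i, W k ω i i = 0) ∧
  iIndepFun
    (fun idx : (Fin T × {q : Fin n × Fin n // q.1 < q.2}) × Bool => fun ω =>
      if idx.2 then (W idx.1.1 ω idx.1.2.1.1 idx.1.2.1.2).re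
      else (W idx.1.1 ω idx.1.2.1.1 idx.1.2.1.2).im) Pr ∧
  (∀ idx : (Fin T × {q : Fin n × Fin n // q.1 < q.2}) × Bool,
    Measure.map (fun ω =>
      if idx.2 then (W idx.1.1 ω idx.1.2.1.1 idx.1.2.1.2).re
      else (W idx.1.1 ω idx.1.2.1.1 idx.1.2.1.2).im) Pr = gaussianReal 0 (1/2))

/-- The uniform distribution on the unit circle `{e^{iθ} : θ ∈ [0, 2π)}`. -/
def uniformPhase : Measure ℂ :=
  Measure.map (fun θ : ℝ => Complex.exp ((θ : ℂ) * Complex.I))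
    ((volume (Set.Ico (0:ℝ) (2*Real.pi)))⁻¹ • volume.restrict (Set.Ico (0:ℝ) (2*Real.pi)))

/-- The law of a single entry in the Outliers model: the true value `z` with probability
`(1-η)p`, a uniform phase with probability `ηp`, and `0` with probability `1-p`. -/
def outlierEntryLaw (η pk : ℝ) (z : ℂ) : Measure ℂ :=
  ENNReal.ofReal ((1-η)*pk) • Measure.dirac z
    + ENNReal.ofReal (η*pk) • uniformPhase
    + ENNReal.ofReal (1-pk) • Measure.dirac 0

/-- The Outliers model: `A 0, …, A (T-1)` are Hermitian with zero diagonal, the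
above-diagonal entries over all times are jointly independent, and the entry `A_{ij}(k)`
(`i < j`) has the outlier mixture law around `g*_i(k) conj (g*_j(k))`. -/
def IsOutliersModel {Ω : Type*} [MeasurableSpace Ω] (Pr : Measure Ω) (T n : ℕ)
    (η : ℝ) (p : ℕ → ℝ) (g : ℕ → Fin n → ℂ)
    (A : ℕ → Ω → Matrix (Fin n) (Fin n) ℂ) : Prop :=
  (∀ k ω, (A k ω).IsHermitian) ∧
  (∀ k ω i, A k ω i i = 0) ∧
  iIndepFun
    (fun idx : Fin T × {q : Fin n × Fin n // q.1 < q.2} => fun ω =>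
      A idx.1 ω idx.2.1.1 idx.2.1.2) Pr ∧
  (∀ (k : Fin T) (q : {q : Fin n × Fin n // q.1 < q.2}),
    Measure.map (fun ω => A (k : ℕ) ω q.1.1 q.1.2) Pr
      = outlierEntryLaw η (p k) (g k q.1.1 * star (g k q.1.2)))

/-- The distribution of a centered Bernoulli random variable with parameter `p`. -/
def bernoulliCentered (p : ℝ) : Measure ℝ :=
  ENNReal.ofReal p • Measure.dirac (1 - p) + ENNReal.ofReal (1 - p) • Measure.dirac (-p)

/-- The sub-Gaussian (ψ₂) norm `sup_{q ≥ 1} q^{-1/2} (E|X|^q)^{1/q}` of a real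
distribution. -/
def psi2 (μ : Measure ℝ) : ℝ :=
  ⨆ q : {x : ℝ // 1 ≤ x}, ((q : ℝ) ^ (-(2:ℝ)⁻¹)) * (∫ x, |x| ^ (q : ℝ) ∂μ) ^ (q : ℝ)⁻¹

/-- `Q(p)`: the ψ₂ norm of a centered Bernoulli with parameter `p`. -/
def Qbern (p : ℝ) : ℝ := psi2 (bernoulliCentered p)

/-- `p_max := max_{k ∈ [T]} p(k)`. -/
def pmaxOf (T : ℕ) (p : ℕ → ℝ) : ℝ := ⨆ k : Fin T, p k

/-- `V := max_{k ∈ [T]} p(k)(1 - p(k))`. -/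
def Vof (T : ℕ) (p : ℕ → ℝ) : ℝ := ⨆ k : Fin T, p k * (1 - p k)

/-- `Q := η + Q(η) + max_{k ∈ [T]} Q(p(k))`. -/
def Qof (T : ℕ) (η : ℝ) (p : ℕ → ℝ) : ℝ := η + Qbern η + ⨆ k : Fin T, Qbern (p k)

/-- `f(η, p_max, V) := p_max η + (1-η)² V + p_max V (1-η)`. -/
def fOut (η pmax V : ℝ) : ℝ := pmax * η + (1-η)^2 * V + pmax * V * (1-η)

/-- `f̃(η, p_max, V, Q, δ) := f(η,p_max,V) + Q² log(1/δ)`. -/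
def ftil (T : ℕ) (η : ℝ) (p : ℕ → ℝ) (δ : ℝ) : ℝ :=
  fOut η (pmaxOf T p) (Vof T p) + (Qof T η p)^2 * Real.log (1/δ)

/-- `d̄ := (1/T) ∑_k (1-η) p(k)`. -/
def dbar (T : ℕ) (η : ℝ) (p : ℕ → ℝ) : ℝ := (∑ k ∈ Finset.range T, (1-η) * p k) / T

/-- `τ* := min{1 + ⌊(T² S_T/(n σ²))^{1/3}⌋, T}` for the AGN model. -/
def tauStarAGN (n T : ℕ) (S σ : ℝ) : ℕ :=
  min (1 + Nat.floor (((T:ℝ)^2 * S / (n * σ^2)) ^ ((3:ℝ)⁻¹))) T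

/-- `τ* := min{1 + ⌊(μ d̄² T² S_T/(n f̃))^{1/3}⌋, T}` for the Outliers model. -/
def tauStarOut (n T : ℕ) (S η : ℝ) (p : ℕ → ℝ) (μ δ : ℝ) : ℕ :=
  min (1 + Nat.floor ((μ * (dbar T η p)^2 * (T:ℝ)^2 * S / (n * ftil T η p δ)) ^ ((3:ℝ)⁻¹))) T

/-- Entrywise projection of a complex vector onto the torus `𝒞_n`. -/
def projC {n : ℕ} (z : Fin n → ℂ) : Fin n → ℂ :=
  fun i => if z i = 0 then 1 else z i / (‖z i‖ : ℂ)

/-- Hermitianization `(M + Mᴴ)/2`. -/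
def hermitize {n : ℕ} (M : Matrix (Fin n) (Fin n) ℂ) : Matrix (Fin n) (Fin n) ℂ :=
  (2 : ℂ)⁻¹ • (M + Mᴴ)

/-- The `k`-th `n × n` block of a stacked `nT × n` matrix. -/
def blockOf {T n : ℕ} (X : Matrix (Fin T × Fin n) (Fin n) ℂ) (k : Fin T) :
    Matrix (Fin n) (Fin n) ℂ := fun i j => X (k, i) j

/-- The spectral local synchronization step: `g'` is a unit-norm top eigenvector of the
Hermitianization of `Ghat`, `θ` is the phase of its first entry (set to `0` if that
entry vanishes), and `ghat = P_{𝒞_n}(g') e^{-iθ}`. -/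
structure SpectralSync {n : ℕ} [NeZero n] (Ghat : Matrix (Fin n) (Fin n) ℂ)
    (g' : Fin n → ℂ) (lam : ℝ) (θ : ℝ) (ghat : Fin n → ℂ) : Prop where
  unit : vecNormSq g' = 1
  eig : (hermitize Ghat) *ᵥ g' = (lam : ℂ) • g'
  top : ∀ (ν : ℝ) (w : Fin n → ℂ), w ≠ 0 → (hermitize Ghat) *ᵥ w = (ν : ℂ) • w → ν ≤ lam
  phase : g' 0 = (‖g' 0‖ : ℂ) * Complex.exp ((θ : ℂ) * Complex.I)
  phase0 : g' 0 = 0 → θ = 0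
  out : ∀ i, ghat i = projC g' i * Complex.exp (-(θ : ℂ) * Complex.I)


namespace BiasBoundAux

open Real Finset

private lemma sum_if_eq_nat {T : ℕ} (f : Fin T → ℝ) (c : ℕ) :
    (∑ t : Fin T, if (t : ℕ) = c then f t else 0) = if h : c < T then f ⟨c, h⟩ else 0 := by
  split_ifs with h
  · rw [Finset.sum_eq_single (⟨c, h⟩ : Fin T)]
    · simp
    · intro b _ hb
      exact if_neg (fun hbc => hb (Fin.ext hbc))
    · intro habs; exact absurd (Finset.mem_univ _) habs
  · exact Finset.sum_eq_zero fun b _ => if_neg (fun hb => h (by rw [← hb]; exact b.isLt))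

private lemma lap_mulVec {T : ℕ} (x : Fin T → ℝ) (t : Fin T) :
    (pathLaplacian T *ᵥ x) t =
      ((if (t:ℕ) = 0 then 0 else 1) + (if (t:ℕ) = T - 1 then 0 else 1)) * x t
        - (if h : (t:ℕ) + 1 < T then x ⟨(t:ℕ)+1, h⟩ else 0)
        - (if h : 0 < (t:ℕ) then x ⟨(t:ℕ)-1, by omega⟩ else 0) := by
  have key : ∀ t' : Fin T, pathLaplacian T t t' * x t' =
      (if (t':ℕ) = (t:ℕ) then
        ((if (t:ℕ) = 0 then (0:ℝ) else 1) + (if (t:ℕ) = T - 1 then 0 else 1)) * x t' else 0)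
      + ((if (t':ℕ) = (t:ℕ)+1 then -x t' else 0)
      + (if 0 < (t:ℕ) then (if (t':ℕ) = (t:ℕ)-1 then -x t' else 0) else 0)) := by
    intro t'
    unfold pathLaplacian
    by_cases h1 : t = t'
    · subst h1
      rw [if_pos rfl, if_pos rfl, if_neg (show ¬((t:ℕ) = (t:ℕ)+1) by omega)]
      by_cases h3 : 0 < (t:ℕ)
      · rw [if_pos h3, if_neg (show ¬((t:ℕ) = (t:ℕ)-1) by omega)]; ring
      · rw [if_neg h3]; ring
    · have hv : ¬((t':ℕ) = (t:ℕ)) := fun h => h1 (Fin.ext h.symm)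
      rw [if_neg h1, if_neg hv]
      by_cases h2 : (t:ℕ)+1 = (t':ℕ)
      · rw [if_pos (Or.inl h2), if_pos h2.symm]
        by_cases h3 : 0 < (t:ℕ)
        · rw [if_pos h3, if_neg (show ¬((t':ℕ) = (t:ℕ)-1) by omega)]; ring
        · rw [if_neg h3]; ring
      · by_cases h3 : (t':ℕ)+1 = (t:ℕ)
        · rw [if_pos (Or.inr h3), if_neg (show ¬((t':ℕ) = (t:ℕ)+1) by omega),
            if_pos (show 0 < (t:ℕ) by omega), if_pos (show (t':ℕ) = (t:ℕ)-1 by omega)]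
          ring
        · rw [if_neg (by tauto), if_neg (show ¬((t':ℕ) = (t:ℕ)+1) by omega)]
          by_cases h4 : 0 < (t:ℕ)
          · rw [if_pos h4, if_neg (show ¬((t':ℕ) = (t:ℕ)-1) by omega)]; ring
          · rw [if_neg h4]; ring
  show (∑ t', pathLaplacian T t t' * x t') = _
  rw [Finset.sum_congr rfl (fun t' _ => key t'), Finset.sum_add_distrib, Finset.sum_add_distrib]
  by_cases ht : 0 < (t:ℕ)
  · simp only [if_pos ht]
    rw [sum_if_eq_nat, sum_if_eq_nat (fun t' => -x t'), sum_if_eq_nat (fun t' => -x t'),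
      dif_pos t.isLt, dif_pos (show (t:ℕ)-1 < T by omega), dif_pos ht]
    by_cases h2 : (t:ℕ)+1 < T
    · rw [dif_pos h2, dif_pos h2]; ring
    · rw [dif_neg h2, dif_neg h2]; ring
  · simp only [if_neg ht]
    rw [sum_if_eq_nat, sum_if_eq_nat (fun t' => -x t'),
      dif_pos t.isLt, dif_neg ht, Finset.sum_const_zero]
    by_cases h2 : (t:ℕ)+1 < T
    · rw [dif_pos h2, dif_pos h2]; ring
    · rw [dif_neg h2, dif_neg h2]; ring

private lemma qform_eq {T : ℕ} (hT : 1 ≤ T) (y : ℕ → ℝ) :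
    (fun t : Fin T => y t) ⬝ᵥ (pathLaplacian T *ᵥ fun t : Fin T => y t)
      = ∑ k ∈ Finset.range (T-1), (y k - y (k+1))^2 := by
  set g : ℕ → ℝ := fun k => (if k = 0 then 0 else y k * y (k-1) * (-1) + y k * y k)
        + (if k = T - 1 then 0 else y k * y k + y k * y (k+1) * (-1)) with hgdef
  have hg : ∀ k, g k = (if k = 0 then 0 else y k * y (k-1) * (-1) + y k * y k)
        + (if k = T - 1 then 0 else y k * y k + y k * y (k+1) * (-1)) := fun k => rfl
  have hrow : ∀ t : Fin T, y (t:ℕ) * ((pathLaplacian T *ᵥ fun t : Fin T => y t) t) = g (t:ℕ) := by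
    intro t
    rw [lap_mulVec, hg]
    by_cases h0 : (t:ℕ) = 0 <;> by_cases hl : (t:ℕ) = T - 1
    · rw [if_pos h0, if_pos hl, if_pos h0, if_pos hl, dif_neg (by omega), dif_neg (by omega)]
      ring
    · rw [if_pos h0, if_neg hl, if_pos h0, if_neg hl, dif_pos (by omega), dif_neg (by omega)]
      simp only [h0]
      ring
    · rw [if_neg h0, if_pos hl, if_neg h0, if_pos hl, dif_neg (by omega), dif_pos (by omega)]
      ring
    · rw [if_neg h0, if_neg hl, if_neg h0, if_neg hl, dif_pos (by omega), dif_pos (by omega)]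
      ring
  show (∑ t : Fin T, y (t:ℕ) * _) = _
  rw [Finset.sum_congr rfl (fun t _ => hrow t), Fin.sum_univ_eq_sum_range g T]
  simp only [hg]
  rw [Finset.sum_add_distrib]
  obtain ⟨m, rfl⟩ : ∃ m, T = m + 1 := ⟨T - 1, by omega⟩
  rw [Finset.sum_range_succ', Finset.sum_range_succ]
  simp only [Nat.add_sub_cancel, Nat.succ_ne_zero, if_true, if_false, add_zero]
  have h2 : ∀ k ∈ Finset.range m, (if k = m then (0:ℝ) else y k * y k + y k * y (k+1) * (-1))
      = y k * y k + y k * y (k+1) * (-1) := by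
    intro k hk
    rw [if_neg (by simpa using (Finset.mem_range.mp hk).ne)]
  rw [Finset.sum_congr rfl h2, ← Finset.sum_add_distrib]
  apply Finset.sum_congr rfl
  intro k _
  ring

/-- explicit eigenvector of the path Laplacian -/
private def uvec (T k t : ℕ) : ℝ := Real.cos ((2*(t:ℝ)+1) * ((k:ℝ) * Real.pi / (2*(T:ℝ))))

/-- explicit eigenvalue -/
private def mu (T k : ℕ) : ℝ := 2 - 2 * Real.cos ((k:ℝ) * Real.pi / (T:ℝ))

private lemma two_theta {T k : ℕ} (hT : 1 ≤ T) :
    2 * ((k:ℝ) * Real.pi / (2*(T:ℝ))) = (k:ℝ) * Real.pi / (T:ℝ) := by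
  have : (T:ℝ) ≠ 0 := Nat.cast_ne_zero.mpr (by omega)
  field_simp

private lemma uvec_eig {T k : ℕ} (hT : 1 ≤ T) (hk : k < T) :
    (pathLaplacian T *ᵥ fun t : Fin T => uvec T k t) = fun t : Fin T => mu T k * uvec T k t := by
  have hT0 : (T:ℝ) ≠ 0 := Nat.cast_ne_zero.mpr (by omega)
  set θ : ℝ := (k:ℝ) * Real.pi / (2*(T:ℝ)) with hθ
  have hmu : mu T k = 2 - 2 * Real.cos (2*θ) := by rw [hθ, two_theta hT]; rfl
  funext t
  rw [lap_mulVec]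
  have hu : ∀ s : ℕ, uvec T k s = Real.cos ((2*(s:ℝ)+1) * θ) := fun s => rfl
  by_cases h0 : (t:ℕ) = 0 <;> by_cases hl : (t:ℕ) = T - 1
  -- t = 0 = T-1, so T = 1, k = 0
  · have hT1 : T = 1 := by omega
    have hk0 : k = 0 := by omega
    rw [if_pos h0, if_pos hl, dif_neg (by omega), dif_neg (by omega), hmu]
    have : θ = 0 := by rw [hθ, hk0]; simp
    rw [this]
    simp
  -- t = 0, T ≥ 2
  · rw [if_pos h0, if_neg hl, dif_pos (by omega), dif_neg (by omega), hmu]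
    have e0 : uvec T k (t:ℕ) = Real.cos θ := by rw [hu, h0]; norm_num
    have e1 : uvec T k ((⟨(t:ℕ)+1, by omega⟩ : Fin T) : ℕ) = Real.cos (θ + 2*θ) := by
      rw [hu]
      norm_num [h0]
      ring_nf
    rw [e0, e1, Real.cos_add]
    have hc2 : Real.cos (2*θ) = 2 * Real.cos θ ^ 2 - 1 := Real.cos_two_mul θ
    have hs2 : Real.sin (2*θ) = 2 * Real.sin θ * Real.cos θ := Real.sin_two_mul θ
    have hpyth : Real.sin θ ^ 2 + Real.cos θ ^ 2 = 1 := Real.sin_sq_add_cos_sq θ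
    rw [hc2, hs2]
    linear_combination (2*Real.cos θ) * hpyth
  -- t = T-1 > 0
  · have h2T : 2 ≤ T := by omega
    rw [if_neg h0, if_pos hl, dif_neg (by omega), dif_pos (by omega), hmu]
    have hA : (2*((t:ℕ):ℝ)+1) * θ = (k:ℝ) * Real.pi - θ := by
      have : ((t:ℕ):ℝ) = (T:ℝ) - 1 := by
        rw [hl]; push_cast [Nat.cast_sub (by omega : 1 ≤ T)]; ring
      rw [this, hθ]
      field_simp
      ring
    have hB : (2*(((⟨(t:ℕ)-1, by omega⟩ : Fin T) : ℕ):ℝ)+1) * θ = (k:ℝ) * Real.pi - 3*θ := by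
      have : (((t:ℕ)-1 : ℕ):ℝ) = (T:ℝ) - 2 := by
        have : (t:ℕ)-1 = T - 2 := by omega
        rw [this]; push_cast [Nat.cast_sub h2T]; ring
      show (2*(((t:ℕ)-1 : ℕ):ℝ)+1) * θ = _
      rw [this, hθ]
      field_simp
      ring
    rw [hu, hu, hA, hB, Real.cos_sub, Real.cos_sub, Real.sin_nat_mul_pi]
    have hc3 : Real.cos (3*θ) = 4 * Real.cos θ ^ 3 - 3 * Real.cos θ := Real.cos_three_mul θ
    have hc2 : Real.cos (2*θ) = 2 * Real.cos θ ^ 2 - 1 := Real.cos_two_mul θ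
    rw [hc3, hc2]
    ring
  -- interior
  · rw [if_neg h0, if_neg hl, dif_pos (by omega), dif_pos (by omega), hmu]
    set A : ℝ := (2*((t:ℕ):ℝ)+1) * θ with hAdef
    have e0 : uvec T k (t:ℕ) = Real.cos A := rfl
    have e1 : uvec T k ((⟨(t:ℕ)+1, by omega⟩ : Fin T) : ℕ) = Real.cos (A + 2*θ) := by
      rw [hu]
      show Real.cos ((2*(((t:ℕ)+1 : ℕ):ℝ)+1) * θ) = _
      push_cast
      ring_nf
      rw [hAdef]; congr 1; ring
    have e2 : uvec T k ((⟨(t:ℕ)-1, by omega⟩ : Fin T) : ℕ) = Real.cos (A - 2*θ) := by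
      rw [hu]
      show Real.cos ((2*(((t:ℕ)-1 : ℕ):ℝ)+1) * θ) = _
      have : (((t:ℕ)-1 : ℕ):ℝ) = ((t:ℕ):ℝ) - 1 := by
        push_cast [Nat.cast_sub (by omega : 1 ≤ (t:ℕ))]; ring
      rw [this]
      ring_nf
      rw [hAdef]; congr 1; ring
    rw [e0, e1, e2, Real.cos_add, Real.cos_sub]
    ring

private lemma mu_nonneg (T k : ℕ) : 0 ≤ mu T k := by
  have := Real.cos_le_one ((k:ℝ) * Real.pi / (T:ℝ))
  unfold mu
  linarith

private lemma mu_strict {T k l : ℕ} (hT : 1 ≤ T) (hkl : k < l) (hl : l ≤ T) :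
    mu T k < mu T l := by
  have hT0 : (0:ℝ) < (T:ℝ) := by exact_mod_cast Nat.pos_of_ne_zero (by omega)
  have hcos : Real.cos ((l:ℝ) * Real.pi / (T:ℝ)) < Real.cos ((k:ℝ) * Real.pi / (T:ℝ)) := by
    apply Real.cos_lt_cos_of_nonneg_of_le_pi
    · positivity
    · rw [div_le_iff₀ hT0]
      have : (l:ℝ) ≤ (T:ℝ) := by exact_mod_cast hl
      nlinarith [Real.pi_pos]
    · have hkl' : (k:ℝ) < (l:ℝ) := by exact_mod_cast hkl
      gcongr
  unfold mu
  linarith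

private lemma mu_mono {T k l : ℕ} (hT : 1 ≤ T) (hkl : k ≤ l) (hl : l ≤ T) :
    mu T k ≤ mu T l := by
  rcases eq_or_lt_of_le hkl with h | h
  · rw [h]
  · exact (mu_strict hT h hl).le

private lemma mu_lb {T τ : ℕ} (hτ1 : 1 ≤ τ) (hτT : τ ≤ T) :
    4 * (τ:ℝ)^2 / (T:ℝ)^2 ≤ mu T τ := by
  have hT0 : (0:ℝ) < (T:ℝ) := by exact_mod_cast Nat.pos_of_ne_zero (by omega)
  have hτ0 : (0:ℝ) ≤ (τ:ℝ) := Nat.cast_nonneg τ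
  have hτT' : (τ:ℝ) ≤ (T:ℝ) := by exact_mod_cast hτT
  set y : ℝ := (τ:ℝ) * Real.pi / (2*(T:ℝ)) with hy
  have hy0 : 0 ≤ y := by positivity
  have hy2 : y ≤ Real.pi / 2 := by
    rw [hy, div_le_div_iff₀ (by positivity) (by norm_num)]
    nlinarith [Real.pi_pos]
  have hsin : (τ:ℝ) / (T:ℝ) ≤ Real.sin y := by
    have h := Real.mul_le_sin hy0 hy2
    have : 2 / Real.pi * y = (τ:ℝ) / (T:ℝ) := by
      rw [hy]
      field_simp
    linarith [this ▸ h]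
  have hsin0 : 0 ≤ Real.sin y := le_trans (by positivity) hsin
  have hcos2 : Real.cos ((τ:ℝ) * Real.pi / (T:ℝ)) = 1 - 2 * Real.sin y ^ 2 := by
    have h2y : (τ:ℝ) * Real.pi / (T:ℝ) = 2 * y := by rw [hy]; field_simp
    rw [h2y, Real.cos_two_mul, ← Real.sin_sq_add_cos_sq y]
    ring
  unfold mu
  rw [hcos2]
  have hsq : ((τ:ℝ)/(T:ℝ))^2 ≤ Real.sin y ^ 2 := by
    apply pow_le_pow_left₀ (by positivity) hsin
  have : 4 * (τ:ℝ)^2/(T:ℝ)^2 = 4 * ((τ:ℝ)/(T:ℝ))^2 := by field_simp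
  rw [this]
  nlinarith [hsq]

private lemma uvec_zero_pos {T k : ℕ} (hk : k < T) : 0 < uvec T k 0 := by
  have hT0 : (0:ℝ) < (T:ℝ) := by exact_mod_cast Nat.pos_of_ne_zero (by omega)
  have : uvec T k 0 = Real.cos ((k:ℝ) * Real.pi / (2*(T:ℝ))) := by
    unfold uvec; norm_num
  rw [this]
  apply Real.cos_pos_of_mem_Ioo
  constructor
  · have : 0 ≤ (k:ℝ) * Real.pi / (2*(T:ℝ)) := by positivity
    linarith [Real.pi_pos]
  · rw [div_lt_div_iff₀ (by positivity) (by norm_num : (0:ℝ) < 2)]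
    have : (k:ℝ) < (T:ℝ) := by exact_mod_cast hk
    nlinarith [Real.pi_pos]

private lemma lap_symm {T : ℕ} (s t : Fin T) : pathLaplacian T s t = pathLaplacian T t s := by
  unfold pathLaplacian
  by_cases h : s = t
  · subst h; rfl
  · rw [if_neg h, if_neg (Ne.symm h)]
    exact if_congr or_comm rfl rfl

private lemma dot_lap_comm {T : ℕ} (x w : Fin T → ℝ) :
    x ⬝ᵥ (pathLaplacian T *ᵥ w) = w ⬝ᵥ (pathLaplacian T *ᵥ x) := by
  show (∑ t, x t * ∑ s, pathLaplacian T t s * w s) = (∑ s, w s * ∑ t, pathLaplacian T s t * x t)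
  simp only [Finset.mul_sum]
  rw [Finset.sum_comm]
  apply Finset.sum_congr rfl
  intro s _
  apply Finset.sum_congr rfl
  intro t _
  rw [lap_symm t s]
  ring


private lemma uvec_orth {T k l : ℕ} (hT : 1 ≤ T) (hk : k < T) (hl : l < T) (hkl : k ≠ l) :
    (∑ t : Fin T, uvec T k t * uvec T l t) = 0 := by
  have h1 : (fun t : Fin T => uvec T k t) ⬝ᵥ (pathLaplacian T *ᵥ fun t : Fin T => uvec T l t)
      = mu T l * ∑ t : Fin T, uvec T k t * uvec T l t := by
    rw [uvec_eig hT hl]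
    show (∑ t : Fin T, uvec T k t * (mu T l * uvec T l t)) = _
    rw [Finset.mul_sum]
    exact Finset.sum_congr rfl fun t _ => by ring
  have h2 : (fun t : Fin T => uvec T l t) ⬝ᵥ (pathLaplacian T *ᵥ fun t : Fin T => uvec T k t)
      = mu T k * ∑ t : Fin T, uvec T k t * uvec T l t := by
    rw [uvec_eig hT hk]
    show (∑ t : Fin T, uvec T l t * (mu T k * uvec T k t)) = _
    rw [Finset.mul_sum]
    exact Finset.sum_congr rfl fun t _ => by ring
  have h3 := dot_lap_comm (fun t : Fin T => uvec T k t) (fun t : Fin T => uvec T l t)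
  rw [h1, h2] at h3
  have hmu : mu T k ≠ mu T l := by
    rcases Nat.lt_or_ge k l with h | h
    · exact (mu_strict hT h (by omega)).ne
    · exact (mu_strict hT (by omega) (by omega)).ne'
  by_contra hne
  exact hmu (by
    rw [mul_eq_mul_right_iff] at h3
    rcases h3 with h3 | h3
    · exact h3.symm
    · exact absurd h3 hne)

private lemma uvec_norm_pos {T k : ℕ} (hk : k < T) :
    0 < ∑ t : Fin T, uvec T k t * uvec T k t := by
  have hT : 0 < T := by omega
  apply Finset.sum_pos' (fun t _ => mul_self_nonneg _)
  exact ⟨⟨0, hT⟩, Finset.mem_univ _, mul_pos (uvec_zero_pos hk) (uvec_zero_pos hk)⟩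

/-- coefficient of `x` along `v i` -/
private def ccoef {T : ℕ} (v : Fin T → Fin T → ℝ) (i : Fin T) (x : Fin T → ℝ) : ℝ :=
  ∑ t, v i t * x t

section EigFacts

variable {T : ℕ} {v : Fin T → Fin T → ℝ} {lam : Fin T → ℝ}

/-- completeness: the rows of `v` also form an orthonormal system -/
private lemma complete (hv : IsPathEigenbasis T v lam) (s t : Fin T) :
    (∑ i, v i s * v i t) = if s = t then 1 else 0 := by
  classical
  set V : Matrix (Fin T) (Fin T) ℝ := Matrix.of v with hV
  have h1 : V * Vᵀ = 1 := by
    ext i j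
    rw [Matrix.mul_apply]
    simp only [hV, Matrix.transpose_apply, Matrix.of_apply]
    rw [hv.ortho i j, Matrix.one_apply]

  have h2 : Vᵀ * V = 1 := mul_eq_one_comm.mp h1
  have h3 := congrFun (congrFun h2 s) t
  rw [Matrix.mul_apply] at h3
  simp only [hV, Matrix.transpose_apply, Matrix.of_apply] at h3
  rw [h3, Matrix.one_apply]

/-- expansion of a vector in the eigenbasis -/
private lemma expand (hv : IsPathEigenbasis T v lam) (x : Fin T → ℝ) (t : Fin T) :
    x t = ∑ i, ccoef v i x * v i t := by
  unfold ccoef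
  have : ∀ i : Fin T, (∑ s, v i s * x s) * v i t = ∑ s, x s * (v i s * v i t) := by
    intro i
    rw [Finset.sum_mul]
    exact Finset.sum_congr rfl fun s _ => by ring
  rw [Finset.sum_congr rfl fun i _ => this i, Finset.sum_comm]
  have : ∀ s : Fin T, (∑ i, x s * (v i s * v i t)) = x s * if s = t then 1 else 0 := by
    intro s
    rw [← Finset.mul_sum, complete hv s t]
  rw [Finset.sum_congr rfl fun s _ => this s]
  simp

/-- Parseval -/
private lemma parseval (hv : IsPathEigenbasis T v lam) (x y : Fin T → ℝ) :
    (∑ i, ccoef v i x * ccoef v i y) = ∑ t, x t * y t := by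
  have h1 : ∀ t : Fin T, x t * y t = ∑ i, ccoef v i x * (v i t * y t) := by
    intro t
    conv_lhs => rw [expand hv x t]
    rw [Finset.sum_mul]
    exact Finset.sum_congr rfl fun i _ => by ring
  rw [Finset.sum_congr rfl fun t _ => h1 t, Finset.sum_comm]
  apply Finset.sum_congr rfl
  intro i _
  unfold ccoef
  rw [← Finset.mul_sum]

/-- spectral representation of the quadratic form -/
private lemma spectral (hv : IsPathEigenbasis T v lam) (x : Fin T → ℝ) :
    x ⬝ᵥ (pathLaplacian T *ᵥ x) = ∑ i, lam i * (ccoef v i x)^2 := by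
  have hc : ∀ i, ccoef v i (pathLaplacian T *ᵥ x) = lam i * ccoef v i x := by
    intro i
    have h1 : ccoef v i (pathLaplacian T *ᵥ x) = (v i) ⬝ᵥ (pathLaplacian T *ᵥ x) := rfl
    rw [h1, dot_lap_comm, hv.eig i]
    show (∑ t, x t * (lam i * v i t)) = _
    unfold ccoef
    rw [Finset.mul_sum]
    exact Finset.sum_congr rfl fun t _ => by ring
  have h2 : x ⬝ᵥ (pathLaplacian T *ᵥ x) = ∑ t, x t * (pathLaplacian T *ᵥ x) t := rfl
  rw [h2, ← parseval hv x (pathLaplacian T *ᵥ x)]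
  apply Finset.sum_congr rfl
  intro i _
  rw [hc i]
  ring

/-- eigenvalues are nonnegative -/
private lemma lam_nonneg (hv : IsPathEigenbasis T v lam) (i : Fin T) : 0 ≤ lam i := by
  have hT : 1 ≤ T := by
    by_contra h
    exact absurd i.isLt (by omega)
  set y : ℕ → ℝ := fun k => if h : k < T then v i ⟨k, h⟩ else 0 with hy
  have hvy : (fun t : Fin T => y t) = v i := by
    funext t
    simp only [hy]
    rw [dif_pos t.isLt]
  have h1 : v i ⬝ᵥ (pathLaplacian T *ᵥ v i) = lam i := by
    rw [hv.eig i]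
    show (∑ t, v i t * (lam i * v i t)) = _
    have : ∀ t : Fin T, v i t * (lam i * v i t) = lam i * (v i t * v i t) := fun t => by ring
    rw [Finset.sum_congr rfl fun t _ => this t, ← Finset.mul_sum, hv.ortho i i, if_pos rfl, mul_one]
  have h2 := qform_eq (T := T) hT y
  rw [hvy] at h2
  rw [← h1, h2]
  positivity

end EigFacts

private lemma lam_lb {T τ : ℕ} {v : Fin T → Fin T → ℝ} {lam : Fin T → ℝ}
    (hv : IsPathEigenbasis T v lam) (hτ1 : 1 ≤ τ) (hτT : τ < T) :
    4 * (τ:ℝ)^2 / (T:ℝ)^2 ≤ lam ⟨T-1-τ, by omega⟩ := by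
  classical
  have hT : 1 ≤ T := by omega
  set m : ℕ := T - τ with hm
  have hm1 : 1 ≤ m := by omega
  have hmT : m ≤ T := by omega
  have hkT : ∀ s : Fin m, τ + (s:ℕ) < T := fun s => by have := s.isLt; omega
  -- constraint matrix padded with a zero row
  set M : Matrix (Fin m) (Fin m) ℝ := fun j s =>
    if (j:ℕ) < m - 1 then
      ∑ t : Fin T, v (Fin.castLE hmT j) t * uvec T (τ + (s:ℕ)) t
    else 0 with hM
  have hdet : M.det = 0 := by
    apply Matrix.det_eq_zero_of_row_eq_zero ⟨m-1, by omega⟩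
    intro s
    simp only [hM]
    rw [if_neg (by omega)]
  obtain ⟨a, ha0, haM⟩ := Matrix.exists_mulVec_eq_zero_iff.mpr hdet
  set w : Fin T → ℝ := fun t => ∑ s : Fin m, a s * uvec T (τ + (s:ℕ)) t with hw
  set nrm : Fin m → ℝ := fun s => ∑ t : Fin T, uvec T (τ+(s:ℕ)) t * uvec T (τ+(s:ℕ)) t with hnrm
  have hnrm_pos : ∀ s : Fin m, 0 < nrm s := fun s => uvec_norm_pos (hkT s)
  have horth : ∀ s s' : Fin m, s ≠ s' →
      (∑ t : Fin T, uvec T (τ+(s:ℕ)) t * uvec T (τ+(s':ℕ)) t) = 0 := by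
    intro s s' h
    exact uvec_orth hT (hkT s) (hkT s') (fun hc => h (Fin.ext (by omega)))
  -- cross-sum computation
  have hcross : ∀ b c : Fin m → ℝ,
      (∑ t : Fin T, (∑ s, b s * uvec T (τ+(s:ℕ)) t) * (∑ s, c s * uvec T (τ+(s:ℕ)) t))
        = ∑ s, b s * c s * nrm s := by
    intro b c
    have step1 : ∀ t : Fin T,
        (∑ s, b s * uvec T (τ+(s:ℕ)) t) * (∑ s, c s * uvec T (τ+(s:ℕ)) t)
          = ∑ s, ∑ s', (b s * c s') * (uvec T (τ+(s:ℕ)) t * uvec T (τ+(s':ℕ)) t) := by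
      intro t
      rw [Finset.sum_mul_sum]
      exact Finset.sum_congr rfl fun s _ => Finset.sum_congr rfl fun s' _ => by ring
    rw [Finset.sum_congr rfl fun t _ => step1 t, Finset.sum_comm]
    apply Finset.sum_congr rfl
    intro s _
    rw [Finset.sum_comm]
    have step2 : ∀ s' : Fin m,
        (∑ t : Fin T, (b s * c s') * (uvec T (τ+(s:ℕ)) t * uvec T (τ+(s':ℕ)) t))
          = (b s * c s') * ∑ t : Fin T, uvec T (τ+(s:ℕ)) t * uvec T (τ+(s':ℕ)) t := by
      intro s'
      rw [Finset.mul_sum]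
    rw [Finset.sum_congr rfl fun s' _ => step2 s']
    rw [Finset.sum_eq_single s (fun s' _ hs' => by rw [horth s s' (Ne.symm hs'), mul_zero])
      (fun h => absurd (Finset.mem_univ s) h)]
  have hW : (∑ t : Fin T, w t * w t) = ∑ s, a s * a s * nrm s := hcross a a
  -- positivity of ‖w‖²
  obtain ⟨s₀, hs₀⟩ := Function.ne_iff.mp ha0
  have hs₀' : a s₀ ≠ 0 := by simpa using hs₀
  have hwpos : 0 < ∑ t : Fin T, w t * w t := by
    rw [hW]
    apply Finset.sum_pos'
    · intro s _
      exact mul_nonneg (mul_self_nonneg _) (hnrm_pos s).le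
    · exact ⟨s₀, Finset.mem_univ _,
        mul_pos (mul_self_pos.mpr hs₀') (hnrm_pos s₀)⟩
  -- action of the Laplacian on w
  have hLw : pathLaplacian T *ᵥ w
      = fun t : Fin T => ∑ s : Fin m, (a s * mu T (τ+(s:ℕ))) * uvec T (τ+(s:ℕ)) (t:ℕ) := by
    have hws : w = ∑ s : Fin m, a s • (fun t : Fin T => uvec T (τ+(s:ℕ)) t) := by
      funext t
      rw [hw]
      rw [Finset.sum_apply]
      rfl
    show (pathLaplacian T).mulVecLin w = _
    rw [hws, map_sum]
    funext t
    rw [Finset.sum_apply]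
    apply Finset.sum_congr rfl
    intro s _
    rw [_root_.map_smul, Matrix.mulVecLin_apply, uvec_eig hT (hkT s)]
    show a s * (mu T (τ+(s:ℕ)) * uvec T (τ+(s:ℕ)) t) = _
    ring
  have hq1 : w ⬝ᵥ (pathLaplacian T *ᵥ w)
      = ∑ s, a s * (a s * mu T (τ+(s:ℕ))) * nrm s := by
    rw [hLw]
    exact hcross a (fun s => a s * mu T (τ+(s:ℕ)))
  -- lower bound on the quadratic form
  have hq_lb : mu T τ * (∑ t : Fin T, w t * w t) ≤ w ⬝ᵥ (pathLaplacian T *ᵥ w) := by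
    rw [hq1, hW, Finset.mul_sum]
    apply Finset.sum_le_sum
    intro s _
    have h1 : mu T τ ≤ mu T (τ+(s:ℕ)) := mu_mono hT (by omega) (by have := s.isLt; omega)
    have h2 : (0:ℝ) ≤ a s * a s * nrm s := mul_nonneg (mul_self_nonneg _) (hnrm_pos s).le
    nlinarith [h1, h2, mul_self_nonneg (a s), (hnrm_pos s).le]
  -- constraints
  have hcst : ∀ i : Fin T, (i:ℕ) < m - 1 → ccoef v i w = 0 := by
    intro i hi
    have hj : (i:ℕ) < m := by omega
    set j₀ : Fin m := ⟨(i:ℕ), hj⟩ with hj₀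
    have hrow := congrFun haM j₀
    have hMi : ∀ s : Fin m, M j₀ s = ∑ t : Fin T, v i t * uvec T (τ + (s:ℕ)) t := by
      intro s
      simp only [hM]
      rw [if_pos (show (j₀:ℕ) < m - 1 from hi)]
      have hce : Fin.castLE hmT j₀ = i := Fin.ext rfl
      rw [hce]
    have hsum : (M *ᵥ a) j₀ = ∑ s : Fin m, (∑ t : Fin T, v i t * uvec T (τ + (s:ℕ)) t) * a s := by
      show (∑ s : Fin m, M j₀ s * a s) = _
      exact Finset.sum_congr rfl fun s _ => by rw [hMi s]
    rw [hrow] at hsum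
    unfold ccoef
    rw [hw]
    have : ∀ t : Fin T, v i t * (∑ s : Fin m, a s * uvec T (τ+(s:ℕ)) t)
        = ∑ s : Fin m, (v i t * uvec T (τ+(s:ℕ)) t) * a s := by
      intro t
      rw [Finset.mul_sum]
      exact Finset.sum_congr rfl fun s _ => by ring
    rw [Finset.sum_congr rfl fun t _ => this t, Finset.sum_comm]
    have : ∀ s : Fin m, (∑ t : Fin T, (v i t * uvec T (τ+(s:ℕ)) t) * a s)
        = (∑ t : Fin T, v i t * uvec T (τ+(s:ℕ)) t) * a s := by
      intro s
      rw [Finset.sum_mul]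
    rw [Finset.sum_congr rfl fun s _ => this s]
    rw [← hsum]
    simp
  -- upper bound on the quadratic form
  have hq_ub : w ⬝ᵥ (pathLaplacian T *ᵥ w)
      ≤ lam ⟨m-1, by omega⟩ * ∑ t : Fin T, w t * w t := by
    rw [spectral hv w, ← parseval hv w w, Finset.mul_sum]
    apply Finset.sum_le_sum
    intro i _
    by_cases hi : (i:ℕ) < m - 1
    · rw [hcst i hi]
      norm_num
    · have hle : lam i ≤ lam ⟨m-1, by omega⟩ := by
        apply hv.anti
        show (m-1 : ℕ) ≤ (i:ℕ)
        omega
      have h0 : (0:ℝ) ≤ ccoef v i w * ccoef v i w := mul_self_nonneg _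
      nlinarith [hle, h0]
  -- conclude
  have hmu_le : mu T τ ≤ lam ⟨m-1, by omega⟩ := by
    have := le_trans hq_lb hq_ub
    exact le_of_mul_le_mul_right (by linarith [this]) hwpos
  have hidx : (⟨T-1-τ, by omega⟩ : Fin T) = ⟨m-1, by omega⟩ := by
    apply Fin.ext
    show T-1-τ = m-1
    omega
  rw [hidx]
  exact le_trans (mu_lb hτ1 hτT.le) hmu_le

/-- the residual of the projection, for a single real vector -/
private def residv {T : ℕ} (v : Fin T → Fin T → ℝ) (τ : ℕ) (x : Fin T → ℝ) (t : Fin T) : ℝ :=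
  x t - ∑ t' : Fin T, (∑ i : Fin T, if T - τ ≤ (i:ℕ) then v i t * v i t' else 0) * x t'

section Resid

variable {T : ℕ} {v : Fin T → Fin T → ℝ} {lam : Fin T → ℝ}

private lemma coeff_of_comb (hv : IsPathEigenbasis T v lam) (d : Fin T → ℝ) (i : Fin T) :
    ccoef v i (fun t => ∑ j, d j * v j t) = d i := by
  unfold ccoef
  have : ∀ t : Fin T, v i t * (∑ j, d j * v j t) = ∑ j, d j * (v i t * v j t) := by
    intro t
    rw [Finset.mul_sum]
    exact Finset.sum_congr rfl fun j _ => by ring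
  rw [Finset.sum_congr rfl fun t _ => this t, Finset.sum_comm]
  have : ∀ j : Fin T, (∑ t, d j * (v i t * v j t)) = d j * if i = j then 1 else 0 := by
    intro j
    rw [← Finset.mul_sum, hv.ortho i j]
  rw [Finset.sum_congr rfl fun j _ => this j]
  simp

private lemma resid_eq_comb (hv : IsPathEigenbasis T v lam) (τ : ℕ) (x : Fin T → ℝ) (t : Fin T) :
    residv v τ x t
      = ∑ i : Fin T, (if T - τ ≤ (i:ℕ) then 0 else ccoef v i x) * v i t := by
  unfold residv
  have hproj : (∑ t' : Fin T, (∑ i : Fin T, if T - τ ≤ (i:ℕ) then v i t * v i t' else 0) * x t')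
      = ∑ i : Fin T, (if T - τ ≤ (i:ℕ) then ccoef v i x * v i t else 0) := by
    have h1 : ∀ t' : Fin T, (∑ i : Fin T, if T - τ ≤ (i:ℕ) then v i t * v i t' else 0) * x t'
        = ∑ i : Fin T, (if T - τ ≤ (i:ℕ) then (v i t' * x t') * v i t else 0) := by
      intro t'
      rw [Finset.sum_mul]
      apply Finset.sum_congr rfl
      intro i _
      split_ifs
      · ring
      · ring
    rw [Finset.sum_congr rfl fun t' _ => h1 t', Finset.sum_comm]
    apply Finset.sum_congr rfl
    intro i _
    split_ifs with h
    · unfold ccoef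
      rw [Finset.sum_mul]
    · exact Finset.sum_const_zero
  rw [hproj]
  have hx := expand hv x t
  rw [hx, ← Finset.sum_sub_distrib]
  apply Finset.sum_congr rfl
  intro i _
  split_ifs with h
  · ring
  · ring

private lemma resid_sq_sum (hv : IsPathEigenbasis T v lam) (τ : ℕ) (x : Fin T → ℝ) :
    (∑ t, residv v τ x t * residv v τ x t)
      = ∑ i : Fin T, (if T - τ ≤ (i:ℕ) then 0 else ccoef v i x)
          * (if T - τ ≤ (i:ℕ) then 0 else ccoef v i x) := by
  have hr : residv v τ x = fun t => ∑ i : Fin T, (if T - τ ≤ (i:ℕ) then 0 else ccoef v i x) * v i t :=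
    funext fun t => resid_eq_comb hv τ x t
  rw [hr, ← parseval hv]
  apply Finset.sum_congr rfl
  intro i _
  rw [coeff_of_comb hv]

private lemma resid_zero (hv : IsPathEigenbasis T v lam) (x : Fin T → ℝ) (t : Fin T) :
    residv v T x t = 0 := by
  rw [resid_eq_comb hv]
  have : ∀ i : Fin T, (if T - T ≤ (i:ℕ) then (0:ℝ) else ccoef v i x) * v i t = 0 := by
    intro i
    rw [if_pos (by omega), zero_mul]
  rw [Finset.sum_congr rfl fun i _ => this i]
  exact Finset.sum_const_zero

/-- the main per-vector bound -/
private lemma resid_bound (hv : IsPathEigenbasis T v lam) {τ : ℕ}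
    (hτ1 : 1 ≤ τ) (hτT : τ < T) (y : ℕ → ℝ) :
    (∑ t, residv v τ (fun t : Fin T => y t) t * residv v τ (fun t : Fin T => y t) t)
      ≤ (T:ℝ)^2 / (4 * (τ:ℝ)^2) * ∑ k ∈ Finset.range (T-1), (y k - y (k+1))^2 := by
  have hT : 1 ≤ T := by omega
  set x : Fin T → ℝ := fun t : Fin T => y t with hx
  set lamstar : ℝ := lam ⟨T-1-τ, by omega⟩ with hls
  have hlamstar : 4 * (τ:ℝ)^2 / (T:ℝ)^2 ≤ lamstar := lam_lb hv hτ1 hτT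
  have hq : (∑ i, lam i * (ccoef v i x)^2) = ∑ k ∈ Finset.range (T-1), (y k - y (k+1))^2 := by
    rw [← spectral hv x, hx, qform_eq hT y]
  set d : Fin T → ℝ := fun i => if T - τ ≤ (i:ℕ) then 0 else ccoef v i x with hd
  have hdd : (∑ t, residv v τ x t * residv v τ x t) = ∑ i, d i * d i := resid_sq_sum hv τ x
  have key : lamstar * (∑ i, d i * d i) ≤ ∑ i, lam i * (ccoef v i x)^2 := by
    rw [Finset.mul_sum]
    apply Finset.sum_le_sum
    intro i _
    by_cases h : T - τ ≤ (i:ℕ)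
    · simp only [hd, if_pos h]
      have := lam_nonneg hv i
      nlinarith [sq_nonneg (ccoef v i x)]
    · simp only [hd, if_neg h]
      have hle : lamstar ≤ lam i := by
        apply hv.anti
        show (i:ℕ) ≤ T-1-τ
        omega
      nlinarith [mul_self_nonneg (ccoef v i x), hle]
  have hsum_nonneg : (0:ℝ) ≤ ∑ i, d i * d i :=
    Finset.sum_nonneg fun i _ => mul_self_nonneg _
  have h1 : 4 * (τ:ℝ)^2 / (T:ℝ)^2 * (∑ i, d i * d i)
      ≤ ∑ k ∈ Finset.range (T-1), (y k - y (k+1))^2 := by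
    rw [← hq]
    calc 4 * (τ:ℝ)^2 / (T:ℝ)^2 * (∑ i, d i * d i)
        ≤ lamstar * (∑ i, d i * d i) := mul_le_mul_of_nonneg_right hlamstar hsum_nonneg
      _ ≤ _ := key
  have hT0 : (0:ℝ) < (T:ℝ) := by exact_mod_cast Nat.pos_of_ne_zero (by omega)
  have hτ0 : (0:ℝ) < (τ:ℝ) := by exact_mod_cast Nat.pos_of_ne_zero (by omega)
  rw [hdd]
  calc (∑ i, d i * d i)
      = (T:ℝ)^2 / (4*(τ:ℝ)^2) * (4 * (τ:ℝ)^2 / (T:ℝ)^2 * (∑ i, d i * d i)) := by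
        field_simp
    _ ≤ (T:ℝ)^2 / (4*(τ:ℝ)^2) * ∑ k ∈ Finset.range (T-1), (y k - y (k+1))^2 := by
        apply mul_le_mul_of_nonneg_left h1 (by positivity)

end Resid

end BiasBoundAux

/-- **Lemma 3.1 (Bias bound).** -/
theorem bias_bound {n T : ℕ} (hn : 2 ≤ n) (hT : 1 ≤ T) (S : ℝ) (hS : 0 ≤ S)
    (X : ℕ → Matrix (Fin n) (Fin n) ℂ)
    (hsmooth : ∑ k ∈ Finset.range (T - 1), frobSq (X k - X (k + 1)) ≤ (2 + 4 * (n : ℝ)) * S)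
    (v : Fin T → Fin T → ℝ) (lam : Fin T → ℝ) (hv : IsPathEigenbasis T v lam)
    (τ : ℕ) (hτ1 : 1 ≤ τ) (hτT : τ ≤ T) :
    frobSq (stackBlocks T X - projStack v τ (stackBlocks T X))
      ≤ (20 * (n : ℝ) / Real.pi ^ 2) * ((T : ℝ) ^ 2 * S / (τ : ℝ) ^ 2)
          * (if τ < T then 1 else 0)
    ∧ (τ = T → frobSq (stackBlocks T X - projStack v τ (stackBlocks T X)) = 0) := by
  classical
  have hnormsq : ∀ z : ℂ, ‖z‖^2 = z.re * z.re + z.im * z.im := by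
    intro z
    rw [Complex.sq_norm, Complex.normSq_apply]
  have hre : ∀ (i j : Fin n) (t : Fin T),
      ((stackBlocks T X - projStack v τ (stackBlocks T X)) (t, i) j).re
        = BiasBoundAux.residv v τ (fun t : Fin T => (X t i j).re) t := by
    intro i j t
    rw [Matrix.sub_apply, Complex.sub_re]
    unfold BiasBoundAux.residv
    congr 1
    show (∑ t' : Fin T,
        (((∑ i' : Fin T, if T - τ ≤ (i':ℕ) then v i' t * v i' t' else 0) : ℝ) : ℂ)
          * X t' i j).re = _
    rw [Complex.re_sum]
    apply Finset.sum_congr rfl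
    intro t' _
    rw [Complex.mul_re]
    simp
  have him : ∀ (i j : Fin n) (t : Fin T),
      ((stackBlocks T X - projStack v τ (stackBlocks T X)) (t, i) j).im
        = BiasBoundAux.residv v τ (fun t : Fin T => (X t i j).im) t := by
    intro i j t
    rw [Matrix.sub_apply, Complex.sub_im]
    unfold BiasBoundAux.residv
    congr 1
    show (∑ t' : Fin T,
        (((∑ i' : Fin T, if T - τ ≤ (i':ℕ) then v i' t * v i' t' else 0) : ℝ) : ℂ)
          * X t' i j).im = _
    rw [Complex.im_sum]
    apply Finset.sum_congr rfl
    intro t' _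
    rw [Complex.mul_im]
    simp
  have hsplit : frobSq (stackBlocks T X - projStack v τ (stackBlocks T X))
      = ∑ i : Fin n, ∑ j : Fin n,
          ((∑ t : Fin T, BiasBoundAux.residv v τ (fun t : Fin T => (X t i j).re) t
              * BiasBoundAux.residv v τ (fun t : Fin T => (X t i j).re) t)
          + (∑ t : Fin T, BiasBoundAux.residv v τ (fun t : Fin T => (X t i j).im) t
              * BiasBoundAux.residv v τ (fun t : Fin T => (X t i j).im) t)) := by
    unfold frobSq
    rw [Fintype.sum_prod_type]
    have h1 : ∀ t : Fin T, ∀ i : Fin n,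
        (∑ j : Fin n, ‖(stackBlocks T X - projStack v τ (stackBlocks T X)) (t, i) j‖^2)
          = ∑ j : Fin n,
            (BiasBoundAux.residv v τ (fun t : Fin T => (X t i j).re) t
              * BiasBoundAux.residv v τ (fun t : Fin T => (X t i j).re) t
            + BiasBoundAux.residv v τ (fun t : Fin T => (X t i j).im) t
              * BiasBoundAux.residv v τ (fun t : Fin T => (X t i j).im) t) := by
      intro t i
      apply Finset.sum_congr rfl
      intro j _
      rw [hnormsq, hre, him]
    rw [Finset.sum_congr rfl fun t _ => Finset.sum_congr rfl fun i _ => h1 t i,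
      Finset.sum_comm]
    apply Finset.sum_congr rfl
    intro i _
    rw [Finset.sum_comm]
    apply Finset.sum_congr rfl
    intro j _
    rw [Finset.sum_add_distrib]
  have hzero : τ = T → frobSq (stackBlocks T X - projStack v τ (stackBlocks T X)) = 0 := by
    intro h
    subst h
    rw [hsplit]
    apply Finset.sum_eq_zero
    intro i _
    apply Finset.sum_eq_zero
    intro j _
    rw [Finset.sum_eq_zero (fun t _ => by rw [BiasBoundAux.resid_zero hv, mul_zero]),
      Finset.sum_eq_zero (fun t _ => by rw [BiasBoundAux.resid_zero hv, mul_zero]),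
      add_zero]
  constructor
  · by_cases hlt : τ < T
    · rw [if_pos hlt, mul_one]
      have hτ0 : (0:ℝ) < (τ:ℝ) := by exact_mod_cast Nat.pos_of_ne_zero (by omega)
      have hT0 : (0:ℝ) < (T:ℝ) := by exact_mod_cast Nat.pos_of_ne_zero (by omega)
      have hfrobk : ∀ k : ℕ, frobSq (X k - X (k+1))
          = ∑ i : Fin n, ∑ j : Fin n,
              (((X k i j).re - (X (k+1) i j).re) * ((X k i j).re - (X (k+1) i j).re)
              + ((X k i j).im - (X (k+1) i j).im) * ((X k i j).im - (X (k+1) i j).im)) := by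
        intro k
        unfold frobSq
        apply Finset.sum_congr rfl
        intro i _
        apply Finset.sum_congr rfl
        intro j _
        rw [Matrix.sub_apply, hnormsq, Complex.sub_re, Complex.sub_im]
      have hmid : frobSq (stackBlocks T X - projStack v τ (stackBlocks T X))
          ≤ (T:ℝ)^2 / (4 * (τ:ℝ)^2) * ∑ k ∈ Finset.range (T-1), frobSq (X k - X (k+1)) := by
        rw [hsplit]
        have step : ∀ i j : Fin n,
            ((∑ t : Fin T, BiasBoundAux.residv v τ (fun t : Fin T => (X t i j).re) t
              * BiasBoundAux.residv v τ (fun t : Fin T => (X t i j).re) t)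
            + (∑ t : Fin T, BiasBoundAux.residv v τ (fun t : Fin T => (X t i j).im) t
              * BiasBoundAux.residv v τ (fun t : Fin T => (X t i j).im) t))
            ≤ (T:ℝ)^2 / (4 * (τ:ℝ)^2) *
              ∑ k ∈ Finset.range (T-1),
                (((X k i j).re - (X (k+1) i j).re) * ((X k i j).re - (X (k+1) i j).re)
                + ((X k i j).im - (X (k+1) i j).im) * ((X k i j).im - (X (k+1) i j).im)) := by
          intro i j
          have hR := BiasBoundAux.resid_bound hv hτ1 hlt (fun k => (X k i j).re)
          have hI := BiasBoundAux.resid_bound hv hτ1 hlt (fun k => (X k i j).im)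
          have hcomb : ∀ k ∈ Finset.range (T-1),
              ((X k i j).re - (X (k+1) i j).re) * ((X k i j).re - (X (k+1) i j).re)
                + ((X k i j).im - (X (k+1) i j).im) * ((X k i j).im - (X (k+1) i j).im)
              = ((X k i j).re - (X (k+1) i j).re)^2 + ((X k i j).im - (X (k+1) i j).im)^2 := by
            intro k _
            ring
          rw [Finset.sum_congr rfl hcomb, Finset.mul_sum]
          have hdistr : ∀ k ∈ Finset.range (T-1),
              (T:ℝ)^2 / (4 * (τ:ℝ)^2) *
                (((X k i j).re - (X (k+1) i j).re)^2 + ((X k i j).im - (X (k+1) i j).im)^2)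
              = (T:ℝ)^2 / (4 * (τ:ℝ)^2) * ((X k i j).re - (X (k+1) i j).re)^2
                + (T:ℝ)^2 / (4 * (τ:ℝ)^2) * ((X k i j).im - (X (k+1) i j).im)^2 :=
            fun k _ => mul_add _ _ _
          rw [Finset.sum_congr rfl hdistr, Finset.sum_add_distrib, ← Finset.mul_sum,
            ← Finset.mul_sum]
          exact add_le_add hR hI
        calc (∑ i : Fin n, ∑ j : Fin n, _)
            ≤ ∑ i : Fin n, ∑ j : Fin n, (T:ℝ)^2 / (4 * (τ:ℝ)^2) *
              ∑ k ∈ Finset.range (T-1),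
                (((X k i j).re - (X (k+1) i j).re) * ((X k i j).re - (X (k+1) i j).re)
                + ((X k i j).im - (X (k+1) i j).im) * ((X k i j).im - (X (k+1) i j).im)) :=
              Finset.sum_le_sum fun i _ => Finset.sum_le_sum fun j _ => step i j
          _ = (T:ℝ)^2 / (4 * (τ:ℝ)^2) * ∑ k ∈ Finset.range (T-1), frobSq (X k - X (k+1)) := by
              have hpull : ∀ i : Fin n,
                  (∑ j : Fin n, (T:ℝ)^2 / (4 * (τ:ℝ)^2) *
                    ∑ k ∈ Finset.range (T-1),
                      (((X k i j).re - (X (k+1) i j).re) * ((X k i j).re - (X (k+1) i j).re)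
                      + ((X k i j).im - (X (k+1) i j).im) * ((X k i j).im - (X (k+1) i j).im)))
                  = (T:ℝ)^2 / (4 * (τ:ℝ)^2) *
                    ∑ j : Fin n, ∑ k ∈ Finset.range (T-1),
                      (((X k i j).re - (X (k+1) i j).re) * ((X k i j).re - (X (k+1) i j).re)
                      + ((X k i j).im - (X (k+1) i j).im) * ((X k i j).im - (X (k+1) i j).im)) :=
                fun i => (Finset.mul_sum _ _ _).symm
              rw [Finset.sum_congr rfl fun i _ => hpull i, ← Finset.mul_sum]
              congr 1
              rw [Finset.sum_congr rfl fun k (_ : k ∈ Finset.range (T-1)) => hfrobk k]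
              rw [Finset.sum_congr rfl
                fun i (_ : i ∈ (Finset.univ : Finset (Fin n))) => Finset.sum_comm]
              exact Finset.sum_comm
      have hπ2 : Real.pi^2 ≤ 10 := by nlinarith [Real.pi_lt_d2, Real.pi_pos]
      have hn2 : (2:ℝ) ≤ (n:ℝ) := by exact_mod_cast hn
      have hcoef : (2 + 4*(n:ℝ))/4 ≤ 20*(n:ℝ)/Real.pi^2 := by
        rw [div_le_div_iff₀ (by norm_num) (by positivity)]
        nlinarith [hπ2, hn2, Real.pi_pos]
      have hfac : (0:ℝ) ≤ (T:ℝ)^2 * S / (τ:ℝ)^2 :=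
        div_nonneg (mul_nonneg (by positivity) hS) (by positivity)
      calc frobSq (stackBlocks T X - projStack v τ (stackBlocks T X))
          ≤ (T:ℝ)^2 / (4 * (τ:ℝ)^2) * ∑ k ∈ Finset.range (T-1), frobSq (X k - X (k+1)) :=
            hmid
        _ ≤ (T:ℝ)^2 / (4 * (τ:ℝ)^2) * ((2 + 4 * (n:ℝ)) * S) :=
            mul_le_mul_of_nonneg_left hsmooth (by positivity)
        _ = ((T:ℝ)^2 * S / (τ:ℝ)^2) * ((2 + 4*(n:ℝ))/4) := by ring
        _ ≤ ((T:ℝ)^2 * S / (τ:ℝ)^2) * (20*(n:ℝ)/Real.pi^2) :=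
            mul_le_mul_of_nonneg_left hcoef hfac
        _ = 20 * (n:ℝ) / Real.pi ^ 2 * ((T:ℝ)^2 * S / (τ:ℝ)^2) := by ring
    · rw [if_neg hlt, mul_zero]
      exact le_of_eq (hzero (by omega))
  · exact hzero

end
end

section
/- (Spectral local synchronization, Proposition 3.6) Let g* = concat(g*(1),…,g*(T)) ∈ 𝒞_{nT} with g*_1(k) = 1 for all k, and let Ḡ*(k) := g*(k) g*(k)^H − I_n. Let Ĝ(k) ∈ ℂ^{n×n} be arbitrary matrices and s(k) > 0 scalars, k ∈ [T]. Define Ĝ'(k) := (Ĝ(k) + Ĝ(k)^H)/2, let ĝ'(k) ∈ ℂ^n be a unit ℓ₂-norm eigenvector of Ĝ'(k) associated with its largest eigenvalue, and set ĝ(k) := P_{𝒞_n}(ĝ'(k))·e^{−i θ̂₁(k)}, where θ̂₁(k) is defined by ĝ'₁(k) = |ĝ'₁(k)| e^{i θ̂₁(k)} (with θ̂₁(k) = 0 if ĝ'₁(k) = 0). Then there exists an absolute constant C > 0 such that for every k ∈ [T], ‖ĝ(k) − g*(k)‖₂ ≤ C ‖Ĝ(k) − s(k) Ḡ*(k)‖_F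 / s(k); consequently, with s_min := min_k s(k), ∑_{k=1}^T ‖ĝ(k) − g*(k)‖₂² ≤ (C²/s_min²) ∑_{k=1}^T ‖Ĝ(k) − s(k) Ḡ*(k)‖_F². -/
open scoped BigOperators
open MeasureTheory ProbabilityTheory Matrix

noncomputable section

open scoped ComplexConjugate

namespace SLS


variable {n : ℕ}

def toE (x : Fin n → ℂ) : EuclideanSpace ℂ (Fin n) := (WithLp.equiv 2 _).symm x

@[simp] lemma toE_apply (x : Fin n → ℂ) (i : Fin n) : toE x i = x i := rfl

lemma toE_sub (x y : Fin n → ℂ) : toE (x - y) = toE x - toE y := rfl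
lemma toE_add (x y : Fin n → ℂ) : toE (x + y) = toE x + toE y := rfl
lemma toE_smul (c : ℂ) (x : Fin n → ℂ) : toE (c • x) = c • toE x := rfl

lemma vecNormSq_nonneg (x : Fin n → ℂ) : 0 ≤ vecNormSq x := by
  unfold vecNormSq; positivity

lemma frobSq_nonneg {m k : Type*} [Fintype m] [Fintype k] (X : Matrix m k ℂ) : 0 ≤ frobSq X := by
  unfold frobSq; positivity

lemma norm_toE_sq (x : Fin n → ℂ) : ‖toE x‖ ^ 2 = vecNormSq x := by
  rw [EuclideanSpace.norm_eq, Real.sq_sqrt (by positivity)]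
  rfl

lemma sqrt_vecNormSq (x : Fin n → ℂ) : Real.sqrt (vecNormSq x) = ‖toE x‖ := by
  rw [← norm_toE_sq, Real.sqrt_sq (norm_nonneg _)]

lemma inner_toE (x y : Fin n → ℂ) :
    (inner ℂ (toE x) (toE y) : ℂ) = ∑ i, conj (x i) * y i := by
  rw [PiLp.inner_apply]
  simp [RCLike.inner_apply]
  exact Finset.sum_congr rfl fun i _ => mul_comm _ _

lemma norm_mulVec_le (M : Matrix (Fin n) (Fin n) ℂ) (x : Fin n → ℂ) :
    ‖toE (M *ᵥ x)‖ ≤ Real.sqrt (frobSq M) * ‖toE x‖ := by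
  have h1 : ‖toE (M *ᵥ x)‖ ^ 2 ≤ frobSq M * ‖toE x‖ ^ 2 := by
    rw [norm_toE_sq, norm_toE_sq]
    unfold vecNormSq frobSq
    calc ∑ i, ‖(M *ᵥ x) i‖ ^ 2
        ≤ ∑ i, (∑ j, ‖M i j‖ * ‖x j‖) ^ 2 := by
          refine Finset.sum_le_sum fun i _ => ?_
          refine pow_le_pow_left₀ (norm_nonneg _) ?_ 2
          calc ‖(M *ᵥ x) i‖ = ‖∑ j, M i j * x j‖ := rfl
            _ ≤ ∑ j, ‖M i j * x j‖ := norm_sum_le _ _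
            _ = ∑ j, ‖M i j‖ * ‖x j‖ := by simp [norm_mul]
      _ ≤ ∑ i, (∑ j, ‖M i j‖ ^ 2) * (∑ j, ‖x j‖ ^ 2) := by
          refine Finset.sum_le_sum fun i _ => ?_
          exact Finset.sum_mul_sq_le_sq_mul_sq _ _ _
      _ = (∑ i, ∑ j, ‖M i j‖ ^ 2) * ∑ j, ‖x j‖ ^ 2 := (Finset.sum_mul _ _ _).symm
  have h2 : (0:ℝ) ≤ Real.sqrt (frobSq M) * ‖toE x‖ := by positivity
  nlinarith [norm_nonneg (toE (M *ᵥ x)), Real.sq_sqrt (frobSq_nonneg M),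
    Real.sqrt_nonneg (frobSq M), norm_nonneg (toE x)]

lemma frobSq_hermitize_le (X : Matrix (Fin n) (Fin n) ℂ) :
    frobSq (hermitize X) ≤ frobSq X := by
  unfold frobSq
  calc ∑ i, ∑ j, ‖hermitize X i j‖ ^ 2
      ≤ ∑ i, ∑ j, (‖X i j‖ ^ 2 + ‖X j i‖ ^ 2) / 2 := by
        refine Finset.sum_le_sum fun i _ => Finset.sum_le_sum fun j _ => ?_
        have he : hermitize X i j = (2:ℂ)⁻¹ * (X i j + conj (X j i)) := by
          simp [hermitize, Matrix.smul_apply, Matrix.add_apply, Matrix.conjTranspose_apply]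
        have h1 : ‖hermitize X i j‖ ≤ (‖X i j‖ + ‖X j i‖) / 2 := by
          rw [he, norm_mul]
          have : ‖(2:ℂ)⁻¹‖ = 2⁻¹ := by norm_num
          rw [this]
          have := norm_add_le (X i j) (conj (X j i))
          rw [RCLike.norm_conj] at this
          linarith
        nlinarith [norm_nonneg (hermitize X i j), sq_nonneg (‖X i j‖ - ‖X j i‖),
          norm_nonneg (X i j), norm_nonneg (X j i)]
    _ = ∑ i, ∑ j, ‖X i j‖ ^ 2 := by
        simp only [add_div, Finset.sum_add_distrib]
        have hswap : ∑ i, ∑ j, ‖X j i‖ ^ 2 / 2 = ∑ i : Fin n, ∑ j, ‖X i j‖ ^ 2 / 2 :=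
          Finset.sum_comm
        rw [hswap, ← Finset.sum_add_distrib]
        refine Finset.sum_congr rfl fun i _ => ?_
        rw [← Finset.sum_add_distrib]
        refine Finset.sum_congr rfl fun j _ => ?_
        ring

lemma toE_sum {ι : Type*} (sfin : Finset ι) (f : ι → (Fin n → ℂ)) :
    toE (∑ i ∈ sfin, f i) = ∑ i ∈ sfin, toE (f i) :=
  map_sum (WithLp.linearEquiv 2 ℂ (Fin n → ℂ)).symm f sfin

lemma rayleigh_le (Hm : Matrix (Fin n) (Fin n) ℂ) (hH : Hm.IsHermitian) (lam : ℝ)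
    (htop : ∀ (ν : ℝ) (y : Fin n → ℂ), y ≠ 0 → Hm *ᵥ y = (ν:ℂ) • y → ν ≤ lam)
    (x : Fin n → ℂ) :
    (inner ℂ (toE x) (toE (Hm *ᵥ x)) : ℂ).re ≤ lam * ‖toE x‖ ^ 2 := by
  classical
  set b := hH.eigenvectorBasis with hbdef
  set μ := hH.eigenvalues with hmudef
  have hb : ∀ i, Hm *ᵥ (fun j => b i j) = ((μ i : ℂ)) • (fun j => b i j) := by
    intro i
    have h := hH.mulVec_eigenvectorBasis i
    funext j
    have hj := congrFun h j
    simpa [Pi.smul_apply, Complex.real_smul] using hj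
  have hμ : ∀ i, μ i ≤ lam := by
    intro i
    refine htop (μ i) _ ?_ (hb i)
    intro h0
    exact b.orthonormal.ne_zero i (by
      ext j
      exact congrFun h0 j)
  set c : Fin n → ℂ := fun i => (inner ℂ (b i) (toE x) : ℂ) with hcdef
  have hxE : toE x = ∑ i, c i • b i := (b.sum_repr' (toE x)).symm
  have hxfun : x = ∑ i, c i • (fun j => b i j) := by
    have h1 := congrArg (WithLp.linearEquiv 2 ℂ (Fin n → ℂ)) hxE
    rw [map_sum] at h1
    exact h1
  have hHx : Hm *ᵥ x = ∑ i, (c i * (μ i : ℂ)) • (fun j => b i j) := by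
    conv_lhs => rw [hxfun]
    rw [show (Hm *ᵥ ∑ i, c i • (fun j => b i j))
        = Hm.mulVecLin (∑ i, c i • (fun j => b i j)) from rfl]
    rw [map_sum]
    refine Finset.sum_congr rfl fun i _ => ?_
    rw [_root_.map_smul, Matrix.mulVecLin_apply, hb i, smul_smul]
  have htoE : toE (Hm *ᵥ x) = ∑ i, (c i * (μ i : ℂ)) • b i := by
    rw [hHx, toE_sum]
    rfl
  have hinner : (inner ℂ (toE x) (toE (Hm *ᵥ x)) : ℂ)
      = ∑ i, (c i * (μ i : ℂ)) * conj (c i) := by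
    rw [htoE, inner_sum]
    refine Finset.sum_congr rfl fun i _ => ?_
    rw [inner_smul_right]
    congr 1
    rw [← inner_conj_symm]
  have hre : (inner ℂ (toE x) (toE (Hm *ᵥ x)) : ℂ).re = ∑ i, μ i * ‖c i‖ ^ 2 := by
    rw [hinner, Complex.re_sum]
    refine Finset.sum_congr rfl fun i _ => ?_
    have : c i * (μ i : ℂ) * conj (c i) = ((μ i * ‖c i‖ ^ 2 : ℝ) : ℂ) := by
      rw [mul_comm (c i) ((μ i : ℂ)), mul_assoc, Complex.mul_conj']
      push_cast
      ring
    rw [this, Complex.ofReal_re]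
  have hsum : ∑ i, ‖c i‖ ^ 2 = ‖toE x‖ ^ 2 := by
    have h := b.sum_inner_mul_inner (toE x) (toE x)
    have h2 : ∀ i, (inner ℂ (toE x) (b i) : ℂ) * inner ℂ (b i) (toE x) = ((‖c i‖ ^ 2 : ℝ) : ℂ) := by
      intro i
      have e1 : (inner ℂ (toE x) (b i) : ℂ) = conj (c i) := (inner_conj_symm _ _).symm
      have e2 : (inner ℂ (b i) (toE x) : ℂ) = c i := rfl
      rw [e1, e2, RCLike.conj_mul]
      norm_cast
    simp only [h2] at h
    rw [inner_self_eq_norm_sq_to_K] at h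
    push_cast at h
    exact Complex.ofReal_injective (by push_cast; exact h)
  rw [hre, ← hsum, Finset.mul_sum]
  refine Finset.sum_le_sum fun i _ => ?_
  have := hμ i
  nlinarith [sq_nonneg (‖c i‖)]

lemma apply_norm_le (x : Fin n → ℂ) (i : Fin n) : ‖x i‖ ≤ ‖toE x‖ := by
  have h1 : ‖x i‖ ^ 2 ≤ ‖toE x‖ ^ 2 := by
    rw [norm_toE_sq]
    unfold vecNormSq
    exact Finset.single_le_sum (f := fun j => ‖x j‖ ^ 2) (fun j _ => by positivity) (Finset.mem_univ i)
  nlinarith [norm_nonneg (x i), norm_nonneg (toE x)]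

lemma circle_proj_lip (a b : ℂ) (ha : ‖a‖ = 1) (hb : b ≠ 0) :
    ‖b / (‖b‖ : ℂ) - a‖ ≤ 2 * ‖b - a‖ := by
  have hnb : (0:ℝ) < ‖b‖ := norm_pos_iff.mpr hb
  have hbc : ((‖b‖ : ℝ) : ℂ) ≠ 0 := by
    exact_mod_cast hnb.ne'
  have h1 : ‖b / (‖b‖ : ℂ) - b‖ = |1 - ‖b‖| := by
    have he : b / (‖b‖ : ℂ) - b = b * (((1 - ‖b‖ : ℝ) : ℂ) / ((‖b‖ : ℝ) : ℂ)) := by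
      push_cast
      rw [← mul_div_assoc, eq_div_iff hbc, sub_mul, div_mul_cancel₀ _ hbc]
      ring
    rw [he, norm_mul, norm_div, Complex.norm_real, Complex.norm_real,
      Real.norm_eq_abs, Real.norm_eq_abs, abs_norm]
    rw [mul_comm, div_mul_cancel₀ _ (ne_of_gt hnb)]
  have h2 : |1 - ‖b‖| ≤ ‖b - a‖ := by
    have := abs_norm_sub_norm_le a b
    rw [ha] at this
    calc |1 - ‖b‖| = |‖a‖ - ‖b‖| := by rw [ha]
      _ ≤ ‖a - b‖ := abs_norm_sub_norm_le a b
      _ = ‖b - a‖ := norm_sub_rev a b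
  calc ‖b / (‖b‖ : ℂ) - a‖ ≤ ‖b / (‖b‖ : ℂ) - b‖ + ‖b - a‖ := by
        have := norm_add_le (b / (‖b‖ : ℂ) - b) (b - a)
        simpa using this
    _ = |1 - ‖b‖| + ‖b - a‖ := by rw [h1]
    _ ≤ ‖b - a‖ + ‖b - a‖ := by linarith
    _ = 2 * ‖b - a‖ := by ring

lemma hermitize_isHermitian (X : Matrix (Fin n) (Fin n) ℂ) : (hermitize X).IsHermitian := by
  unfold Matrix.IsHermitian
  ext i j
  simp only [hermitize, Matrix.conjTranspose_apply, Matrix.smul_apply, Matrix.add_apply,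
    smul_eq_mul]
  rw [star_mul', star_add, star_star]
  rw [show star ((2:ℂ)⁻¹) = (2:ℂ)⁻¹ from by simp [Complex.star_def, map_inv₀]]
  ring

set_option maxHeartbeats 1600000 in
lemma key {n : ℕ} [NeZero n] (hn : 2 ≤ n) (g : Fin n → ℂ) (hg1 : ∀ i, ‖g i‖ = 1)
    (hg0 : g 0 = 1)
    (Ghat : Matrix (Fin n) (Fin n) ℂ) (s : ℝ) (hs : 0 < s)
    (g' : Fin n → ℂ) (lam θ : ℝ) (ghat : Fin n → ℂ)
    (hS : SpectralSync Ghat g' lam θ ghat) :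
    Real.sqrt (vecNormSq (ghat - g)) ≤ 100 * Real.sqrt (frobSq (Ghat - (s:ℂ) • GbarM g)) / s := by
  obtain ⟨hunit, heig, htop, hphase, hphase0, hout⟩ := hS
  have hn1 : (1:ℝ) ≤ (n:ℝ) := by exact_mod_cast Nat.one_le_of_lt hn
  have hnpos : (0:ℝ) < (n:ℝ) := by linarith
  have hnC : ((n:ℝ):ℂ) ≠ 0 := by exact_mod_cast hnpos.ne'
  have hsqn1 : (1:ℝ) ≤ Real.sqrt n := by
    rw [show (1:ℝ) = Real.sqrt 1 by simp]
    exact Real.sqrt_le_sqrt hn1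
  have hsqnpos : (0:ℝ) < Real.sqrt n := by linarith
  have hsqn : Real.sqrt n ≤ (n:ℝ) := by
    nlinarith [Real.sq_sqrt (le_of_lt hnpos), Real.sqrt_nonneg (n:ℝ)]
  have hsqsq : Real.sqrt n * Real.sqrt n = (n:ℝ) := Real.mul_self_sqrt (le_of_lt hnpos)
  set M : Matrix (Fin n) (Fin n) ℂ := (s:ℂ) • GbarM g with hM
  set D : Matrix (Fin n) (Fin n) ℂ := Ghat - M with hD
  set εF : ℝ := Real.sqrt (frobSq D) with hεdef
  have hε0 : 0 ≤ εF := Real.sqrt_nonneg _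
  set Hm : Matrix (Fin n) (Fin n) ℂ := hermitize Ghat with hHm
  have hherm : Hm.IsHermitian := hermitize_isHermitian Ghat
  have hMH : Mᴴ = M := by
    ext i j
    simp only [hM, Matrix.conjTranspose_apply, Matrix.smul_apply, GbarM, Matrix.sub_apply,
      outerH, Matrix.one_apply, smul_eq_mul]
    rw [star_mul', star_sub, star_mul', star_star]
    rw [show star (((s:ℝ)):ℂ) = ((s:ℝ):ℂ) from by simp [Complex.star_def, Complex.conj_ofReal]]
    rw [show star (ite (j=i) (1:ℂ) 0) = ite (i=j) (1:ℂ) 0 from by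
      by_cases h : i = j <;> simp [h, eq_comm]]
    ring
  set E : Matrix (Fin n) (Fin n) ℂ := Hm - M with hE
  have hED : E = hermitize D := by
    ext i j
    have hMij : star (M j i) = M i j := by
      rw [← Matrix.conjTranspose_apply, hMH]
    simp only [hE, hHm, hD, hermitize, Matrix.sub_apply, Matrix.smul_apply, Matrix.add_apply,
      Matrix.conjTranspose_apply, smul_eq_mul]
    rw [star_sub, hMij]
    ring
  have hfrobE : Real.sqrt (frobSq E) ≤ εF := by
    rw [hεdef]
    apply Real.sqrt_le_sqrt
    rw [hED]
    exact frobSq_hermitize_le D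
  -- norms of g and g'
  have hgsum : vecNormSq g = (n:ℝ) := by
    unfold vecNormSq
    simp [hg1]
  have hgnorm2 : ‖toE g‖ ^ 2 = (n:ℝ) := by rw [norm_toE_sq]; exact hgsum
  have hgnorm : ‖toE g‖ = Real.sqrt n := by
    rw [← sqrt_vecNormSq, hgsum]
  have hvnorm : ‖toE g'‖ = 1 := by
    rw [← sqrt_vecNormSq, hunit, Real.sqrt_one]
  have hgg : (inner ℂ (toE g) (toE g) : ℂ) = ((n:ℝ):ℂ) := by
    rw [inner_toE]
    have hone : ∀ i : Fin n, conj (g i) * g i = 1 := by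
      intro i
      rw [RCLike.conj_mul, hg1 i]
      norm_num
    rw [Finset.sum_congr rfl (fun i _ => hone i)]
    simp [Finset.sum_const, Finset.card_univ]
  -- beta and w
  set β : ℂ := inner ℂ (toE g) (toE g') with hβ
  set w : Fin n → ℂ := g' - (β / (n:ℂ)) • g with hw
  have hginner : ∀ y : Fin n → ℂ, (inner ℂ (toE g) (toE y) : ℂ) = ∑ j, conj (g j) * y j :=
    fun y => inner_toE g y
  have hwin : (inner ℂ (toE g) (toE w) : ℂ) = 0 := by
    rw [hw, toE_sub, toE_smul, inner_sub_right, inner_smul_right, hgg, ← hβ]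
    field_simp
    simp [NeZero.ne n]
  -- mulVec formulas
  have hMv : ∀ y : Fin n → ℂ, M *ᵥ y = (s:ℂ) • (((inner ℂ (toE g) (toE y) : ℂ)) • g - y) := by
    intro y
    funext i
    rw [hginner y]
    simp only [Matrix.mulVec, dotProduct, hM, Matrix.smul_apply, GbarM, Matrix.sub_apply,
      outerH, Matrix.one_apply, smul_eq_mul, Pi.smul_apply, Pi.sub_apply, Complex.star_def]
    rw [Finset.sum_congr rfl (fun j _ => show ((s:ℂ) * (g i * (starRingEnd ℂ) (g j) - ite (i=j) 1 0)) * y j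
        = (s:ℂ) * g i * ((starRingEnd ℂ) (g j) * y j) - (s:ℂ) * (ite (i=j) (1:ℂ) 0 * y j) by ring)]
    rw [Finset.sum_sub_distrib, ← Finset.mul_sum]
    rw [show ∑ j, (s:ℂ) * (ite (i=j) (1:ℂ) 0 * y j) = (s:ℂ) * y i by
      rw [← Finset.mul_sum]
      congr 1
      simp [Finset.sum_ite_eq]]
    ring
  have hMvg' : M *ᵥ g' = (s:ℂ) • (β • g - g') := by rw [hMv g', ← hβ]
  have hMvg : M *ᵥ g = ((s:ℂ) * ((n:ℝ):ℂ) - s) • g := by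
    rw [hMv g, hgg]
    funext i
    simp only [Pi.smul_apply, Pi.sub_apply, smul_eq_mul]
    ring
  have hEvv : E *ᵥ g' = ((lam:ℂ) + s) • g' - ((s:ℂ) * β) • g := by
    rw [hE, Matrix.sub_mulVec, heig, hMvg']
    funext i
    simp only [Pi.smul_apply, Pi.sub_apply, smul_eq_mul]
    ring
  have hg'dec : g' = (β / (n:ℂ)) • g + w := by
    rw [hw]
    funext i
    simp only [Pi.add_apply, Pi.sub_apply, Pi.smul_apply, smul_eq_mul]
    ring
  set c1 : ℂ := ((lam:ℂ) + s) * (β / (n:ℂ)) - (s:ℂ) * β with hc1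
  have hEv2 : toE (E *ᵥ g') = c1 • toE g + ((lam:ℂ) + s) • toE w := by
    have hfun : E *ᵥ g' = c1 • g + ((lam:ℂ) + s) • w := by
      rw [hEvv, hw, hc1]
      funext i
      simp only [Pi.add_apply, Pi.sub_apply, Pi.smul_apply, smul_eq_mul]
      ring
    rw [hfun, toE_add, toE_smul, toE_smul]
  have hpyth : ‖((lam:ℂ) + s) • toE w‖ ≤ ‖toE (E *ᵥ g')‖ := by
    have hort : (inner ℂ (c1 • toE g) (((lam:ℂ) + s) • toE w) : ℂ) = 0 := by
      rw [inner_smul_left, inner_smul_right, hwin]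
      ring
    have hsq := norm_add_sq (𝕜 := ℂ) (c1 • toE g) (((lam:ℂ) + s) • toE w)
    rw [hort] at hsq
    simp only [map_zero, mul_zero, add_zero] at hsq
    rw [hEv2]
    nlinarith [norm_nonneg (c1 • toE g), norm_nonneg (((lam:ℂ) + s) • toE w),
      norm_nonneg (c1 • toE g + ((lam:ℂ) + s) • toE w), sq_nonneg (‖c1 • toE g‖)]
  have hlamw : |lam + s| * ‖toE w‖ ≤ εF := by
    have h1 : ‖((lam:ℂ) + s) • toE w‖ = |lam + s| * ‖toE w‖ := by
      rw [norm_smul]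
      congr 1
      rw [show (lam:ℂ) + s = ((lam + s : ℝ):ℂ) by push_cast; ring]
      rw [Complex.norm_real, Real.norm_eq_abs]
    calc |lam + s| * ‖toE w‖ = ‖((lam:ℂ) + s) • toE w‖ := h1.symm
      _ ≤ ‖toE (E *ᵥ g')‖ := hpyth
      _ ≤ Real.sqrt (frobSq E) * ‖toE g'‖ := norm_mulVec_le E g'
      _ = Real.sqrt (frobSq E) := by rw [hvnorm, mul_one]
      _ ≤ εF := hfrobE
  -- Rayleigh bound
  have hray : s * (n:ℝ) - εF ≤ lam + s := by
    have h1 : (inner ℂ (toE g) (toE (Hm *ᵥ g)) : ℂ).re ≤ lam * (n:ℝ) := by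
      have h := rayleigh_le Hm hherm lam htop g
      rw [hgnorm2] at h
      exact h
    have h2 : Hm *ᵥ g = M *ᵥ g + E *ᵥ g := by
      rw [hE, Matrix.sub_mulVec]
      funext i
      simp only [Pi.add_apply, Pi.sub_apply]
      ring
    have h3 : (inner ℂ (toE g) (toE (Hm *ᵥ g)) : ℂ)
        = (inner ℂ (toE g) (toE (M *ᵥ g)) : ℂ) + (inner ℂ (toE g) (toE (E *ᵥ g)) : ℂ) := by
      rw [h2, toE_add, inner_add_right]
    have h4 : (inner ℂ (toE g) (toE (M *ᵥ g)) : ℂ) = ((s * (n:ℝ) - s) * (n:ℝ) : ℝ) := by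
      rw [hMvg, toE_smul, inner_smul_right, hgg]
      push_cast
      ring
    have h5 : |(inner ℂ (toE g) (toE (E *ᵥ g)) : ℂ).re| ≤ εF * (n:ℝ) := by
      have hcs := norm_inner_le_norm (𝕜 := ℂ) (toE g) (toE (E *ᵥ g))
      have hEg : ‖toE (E *ᵥ g)‖ ≤ εF * Real.sqrt n := by
        calc ‖toE (E *ᵥ g)‖ ≤ Real.sqrt (frobSq E) * ‖toE g‖ := norm_mulVec_le E g
          _ ≤ εF * Real.sqrt n := by
            rw [hgnorm]
            exact mul_le_mul_of_nonneg_right hfrobE (Real.sqrt_nonneg _)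
      have habs : |(inner ℂ (toE g) (toE (E *ᵥ g)) : ℂ).re| ≤ ‖(inner ℂ (toE g) (toE (E *ᵥ g)) : ℂ)‖ :=
        Complex.abs_re_le_norm _
      calc |(inner ℂ (toE g) (toE (E *ᵥ g)) : ℂ).re| ≤ ‖(inner ℂ (toE g) (toE (E *ᵥ g)) : ℂ)‖ := habs
        _ ≤ ‖toE g‖ * ‖toE (E *ᵥ g)‖ := hcs
        _ ≤ Real.sqrt n * (εF * Real.sqrt n) := by
            rw [hgnorm]
            exact mul_le_mul_of_nonneg_left hEg (Real.sqrt_nonneg _)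
        _ = εF * (n:ℝ) := by
            rw [show Real.sqrt n * (εF * Real.sqrt n) = εF * (Real.sqrt n * Real.sqrt n) by ring,
              hsqsq]
    have h6 : (s * (n:ℝ) - s) * (n:ℝ) - εF * (n:ℝ) ≤ lam * (n:ℝ) := by
      have := h1
      rw [h3] at this
      simp only [Complex.add_re, h4, Complex.ofReal_re] at this
      have := abs_le.mp h5
      linarith
    have h7 : s * (n:ℝ) - s - εF ≤ lam := by
      nlinarith [h6]
    linarith
  -- case split
  by_cases hcase : εF ≤ s * Real.sqrt n / 8
  case neg =>
    have hghat1 : ∀ i, ‖ghat i‖ = 1 := by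
      intro i
      rw [hout i, norm_mul]
      have hproj : ‖projC g' i‖ = 1 := by
        unfold projC
        by_cases h : g' i = 0
        · simp [h]
        · simp only [h, if_false]
          rw [norm_div, Complex.norm_real, Real.norm_eq_abs, abs_norm,
            div_self (norm_ne_zero_iff.mpr h)]
      have hexp : ‖Complex.exp (-(θ:ℂ) * Complex.I)‖ = 1 := by
        rw [show (-(θ:ℂ) * Complex.I) = ((-θ:ℝ):ℂ) * Complex.I by push_cast; ring]
        exact Complex.norm_exp_ofReal_mul_I (-θ)
      rw [hproj, hexp, mul_one]
    have hsumv : vecNormSq (ghat - g) ≤ 4 * (n:ℝ) := by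
      unfold vecNormSq
      calc ∑ i, ‖(ghat - g) i‖ ^ 2 ≤ ∑ _i : Fin n, (4:ℝ) := by
            refine Finset.sum_le_sum fun i _ => ?_
            have hb : ‖(ghat - g) i‖ ≤ 2 := by
              rw [Pi.sub_apply]
              calc ‖ghat i - g i‖ ≤ ‖ghat i‖ + ‖g i‖ := norm_sub_le _ _
                _ = 2 := by rw [hghat1 i, hg1 i]; norm_num
            nlinarith [norm_nonneg ((ghat - g) i)]
        _ = 4 * (n:ℝ) := by
            rw [Finset.sum_const, Finset.card_univ, Fintype.card_fin]
            push_cast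
            ring
    have hL : Real.sqrt (vecNormSq (ghat - g)) ≤ 2 * Real.sqrt n := by
      have h4 : (4:ℝ) * n = (2 * Real.sqrt n)^2 := by
        rw [mul_pow, Real.sq_sqrt (le_of_lt hnpos)]
        ring
      calc Real.sqrt (vecNormSq (ghat - g)) ≤ Real.sqrt (4 * (n:ℝ)) := Real.sqrt_le_sqrt hsumv
        _ = 2 * Real.sqrt n := by rw [h4, Real.sqrt_sq (by positivity)]
    have hR : 2 * Real.sqrt n ≤ 100 * εF / s := by
      have h8 : s * Real.sqrt n / 8 < εF := lt_of_not_ge hcase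
      rw [le_div_iff₀ hs]
      nlinarith [hsqnpos]
    linarith
  case pos =>
    have hcase' : εF ≤ s * (n:ℝ) / 8 := by
      nlinarith [mul_le_mul_of_nonneg_left hsqn hs.le]
    have hls : s * (n:ℝ) / 2 ≤ lam + s := by linarith [hray, hcase']
    have hlspos : 0 < lam + s := lt_of_lt_of_le (by positivity) hls
    have hwb' : ‖toE w‖ * (s * (n:ℝ)) ≤ 2 * εF := by
      rw [abs_of_pos hlspos] at hlamw
      nlinarith [mul_le_mul_of_nonneg_right hls (norm_nonneg (toE w))]
    set a : ℂ := β / (n:ℂ) with ha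
    have hg'a : g' = a • g + w := hg'dec
    have hsplit : ‖a‖^2 * (n:ℝ) + ‖toE w‖^2 = 1 := by
      have h1 : toE g' = a • toE g + toE w := by
        rw [hg'a, toE_add, toE_smul]
      have hoo : (inner ℂ (a • toE g) (toE w) : ℂ) = 0 := by
        rw [inner_smul_left, hwin, mul_zero]
      have hsq := norm_add_sq (𝕜 := ℂ) (a • toE g) (toE w)
      rw [hoo] at hsq
      simp only [map_zero, mul_zero, add_zero] at hsq
      rw [← h1, hvnorm, norm_smul, hgnorm] at hsq
      nlinarith [hsqsq]
    have hw1 : ‖toE w‖ ≤ 1 := by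
      nlinarith [norm_nonneg (toE w), sq_nonneg ‖a‖, mul_nonneg (sq_nonneg ‖a‖) hnpos.le]
    set r : ℝ := Real.sqrt n * ‖a‖ with hrdef
    have hr0 : 0 ≤ r := by positivity
    have hr2 : r^2 + ‖toE w‖^2 = 1 := by
      rw [hrdef]
      nlinarith [hsplit, hsqsq]
    have hr1 : r ≤ 1 := by nlinarith [sq_nonneg (‖toE w‖)]
    have h1r : 1 - r ≤ ‖toE w‖^2 := by nlinarith [mul_nonneg hr0 (by linarith : (0:ℝ) ≤ 1 - r)]
    set ζ : ℂ := if a = 0 then 1 else conj a / ((‖a‖:ℝ) : ℂ) with hζdef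
    have hζ1 : ‖ζ‖ = 1 := by
      rw [hζdef]
      by_cases h : a = 0
      · simp [h]
      · simp only [h, if_false]
        rw [norm_div, RCLike.norm_conj, Complex.norm_real, Real.norm_eq_abs, abs_norm,
          div_self (norm_ne_zero_iff.mpr h)]
    have hζa : ζ * a = ((‖a‖:ℝ) : ℂ) := by
      rw [hζdef]
      by_cases h : a = 0
      · simp [h]
      · simp only [h, if_false]
        have hca : ((‖a‖:ℝ):ℂ) ≠ 0 := by
          exact_mod_cast (norm_ne_zero_iff.mpr h)
        rw [div_mul_eq_mul_div, mul_comm ((starRingEnd ℂ) a) a, Complex.mul_conj']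
        rw [show ((‖a‖:ℝ):ℂ)^2 = ((‖a‖:ℝ):ℂ) * ((‖a‖:ℝ):ℂ) by ring]
        rw [mul_div_assoc, div_self hca, mul_one]
    set z : Fin n → ℂ := (((Real.sqrt n : ℝ):ℂ) * ζ) • g' with hzdef
    have hζag : ((Real.sqrt n:ℝ):ℂ) * ζ * a = ((r:ℝ):ℂ) := by
      rw [mul_assoc, hζa, hrdef]
      push_cast
      ring
    have hzg : toE z - toE g = (((r:ℝ):ℂ) - 1) • toE g + (((Real.sqrt n:ℝ):ℂ) * ζ) • toE w := by
      have hfun : z - g = (((r:ℝ):ℂ) - 1) • g + (((Real.sqrt n:ℝ):ℂ) * ζ) • w := by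
        rw [hzdef]
        conv_lhs => rw [hg'a]
        funext i
        simp only [Pi.add_apply, Pi.sub_apply, Pi.smul_apply, smul_eq_mul]
        linear_combination (g i) * hζag
      rw [← toE_sub, hfun, toE_add, toE_smul, toE_smul]
    set δ : ℝ := ‖toE z - toE g‖ with hδdef
    have hδ0 : 0 ≤ δ := norm_nonneg _
    have hδle : δ ≤ 2 * Real.sqrt n * ‖toE w‖ := by
      have hA : ‖(((r:ℝ):ℂ) - 1) • toE g‖ = |r - 1| * Real.sqrt n := by
        rw [norm_smul, hgnorm]
        congr 1
        rw [show ((r:ℝ):ℂ) - 1 = ((r - 1 : ℝ):ℂ) by push_cast; ring, Complex.norm_real,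
          Real.norm_eq_abs]
      have hB : ‖(((Real.sqrt n:ℝ):ℂ) * ζ) • toE w‖ = Real.sqrt n * ‖toE w‖ := by
        rw [norm_smul, norm_mul, hζ1, Complex.norm_real, Real.norm_eq_abs,
          abs_of_pos hsqnpos, mul_one]
      have habs : |r - 1| ≤ ‖toE w‖^2 := by
        rw [abs_of_nonpos (by linarith : r - 1 ≤ 0)]
        linarith
      have hsq' : ‖toE w‖^2 ≤ ‖toE w‖ := by nlinarith [norm_nonneg (toE w)]
      have htri : δ ≤ ‖(((r:ℝ):ℂ) - 1) • toE g‖ + ‖(((Real.sqrt n:ℝ):ℂ) * ζ) • toE w‖ := by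
        rw [hδdef, hzg]
        exact norm_add_le _ _
      rw [hA, hB] at htri
      nlinarith [mul_le_mul_of_nonneg_right habs hsqnpos.le,
        mul_le_mul_of_nonneg_right hsq' hsqnpos.le]
    have hδeps : δ * (s * Real.sqrt n) ≤ 4 * εF := by
      have h1 := mul_le_mul_of_nonneg_right hδle (by positivity : (0:ℝ) ≤ s * Real.sqrt n)
      have h2 : 2 * Real.sqrt n * ‖toE w‖ * (s * Real.sqrt n) = 2 * (‖toE w‖ * (s * (n:ℝ))) := by
        rw [show 2 * Real.sqrt n * ‖toE w‖ * (s * Real.sqrt n)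
            = 2 * (‖toE w‖ * (s * (Real.sqrt n * Real.sqrt n))) by ring, hsqsq]
      rw [h2] at h1
      linarith
    have hδhalf : δ ≤ 1/2 := by
      have hsn : 0 < s * Real.sqrt n := mul_pos hs hsqnpos
      have h1 : δ * (s * Real.sqrt n) ≤ (1/2) * (s * Real.sqrt n) := by
        calc δ * (s * Real.sqrt n) ≤ 4 * εF := hδeps
          _ ≤ (1/2) * (s * Real.sqrt n) := by linarith [hcase]
      exact le_of_mul_le_mul_right h1 hsn
    have hz0 : ‖z 0 - 1‖ ≤ δ := by
      have h := apply_norm_le (z - g) 0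
      rw [toE_sub, Pi.sub_apply, hg0, ← hδdef] at h
      exact h
    set t : ℝ := Real.sqrt n * ‖g' 0‖ with htdef
    have ht0 : 0 ≤ t := by positivity
    have hzt : ‖z 0‖ = t := by
      rw [hzdef, htdef]
      simp only [Pi.smul_apply, smul_eq_mul, norm_mul, hζ1, Complex.norm_real,
        Real.norm_eq_abs, abs_of_pos hsqnpos]
      ring
    have ht1 : |t - 1| ≤ δ := by
      calc |t - 1| = |‖z 0‖ - ‖(1:ℂ)‖| := by rw [hzt, norm_one]
        _ ≤ ‖z 0 - 1‖ := abs_norm_sub_norm_le _ _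
        _ ≤ δ := hz0
    have ht : 1/2 ≤ t := by
      have := abs_le.mp ht1
      linarith
    set ξ : ℂ := Complex.exp (-(θ:ℂ) * Complex.I) with hξdef
    have hξ1 : ‖ξ‖ = 1 := by
      rw [hξdef, show (-(θ:ℂ) * Complex.I) = ((-θ:ℝ):ℂ) * Complex.I by push_cast; ring]
      exact Complex.norm_exp_ofReal_mul_I (-θ)
    have hξexp : ξ * Complex.exp ((θ:ℂ) * Complex.I) = 1 := by
      rw [hξdef, ← Complex.exp_add]
      rw [show -(θ:ℂ) * Complex.I + (θ:ℂ) * Complex.I = 0 by ring, Complex.exp_zero]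
    set y : Fin n → ℂ := (((Real.sqrt n:ℝ):ℂ) * ξ) • g' with hydef
    have hy0 : y 0 = ((t:ℝ):ℂ) := by
      have hyy : y 0 = ((Real.sqrt n:ℝ):ℂ) * ξ * g' 0 := by
        rw [hydef]
        simp only [Pi.smul_apply, smul_eq_mul]
      rw [hyy, htdef]
      conv_lhs => rw [hphase]
      push_cast
      linear_combination ((Real.sqrt n:ℂ) * ((‖g' 0‖:ℝ):ℂ)) * hξexp
    have hyz0 : ‖y 0 - z 0‖ ≤ 2 * δ := by
      have hb1 : ‖y 0 - 1‖ = |t - 1| := by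
        rw [hy0, show ((t:ℝ):ℂ) - 1 = ((t - 1:ℝ):ℂ) by push_cast; ring, Complex.norm_real,
          Real.norm_eq_abs]
      have hb2 : ‖1 - z 0‖ = ‖z 0 - 1‖ := norm_sub_rev _ _
      calc ‖y 0 - z 0‖ = ‖(y 0 - 1) + (1 - z 0)‖ := by ring_nf
        _ ≤ ‖y 0 - 1‖ + ‖1 - z 0‖ := norm_add_le _ _
        _ ≤ δ + δ := by
            rw [hb1, hb2]
            exact add_le_add ht1 hz0
        _ = 2 * δ := by ring
    have hξζ : ‖ξ - ζ‖ ≤ 4 * δ := by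
      have hyzfact : y 0 - z 0 = ((Real.sqrt n:ℝ):ℂ) * (ξ - ζ) * g' 0 := by
        rw [hydef, hzdef]
        simp only [Pi.smul_apply, smul_eq_mul]
        ring
      have hn2 : ‖y 0 - z 0‖ = t * ‖ξ - ζ‖ := by
        rw [hyzfact, norm_mul, norm_mul, Complex.norm_real, Real.norm_eq_abs,
          abs_of_pos hsqnpos, htdef]
        ring
      have hkey : t * ‖ξ - ζ‖ ≤ 2 * δ := by
        rw [← hn2]
        exact hyz0
      have h3 : (1/2) * ‖ξ - ζ‖ ≤ t * ‖ξ - ζ‖ :=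
        mul_le_mul_of_nonneg_right ht (norm_nonneg _)
      linarith
    have hyg : ‖toE y - toE g‖ ≤ 5 * δ * Real.sqrt n := by
      have h1 : toE y - toE z = (((Real.sqrt n:ℝ):ℂ) * (ξ - ζ)) • toE g' := by
        have hfun : y - z = (((Real.sqrt n:ℝ):ℂ) * (ξ - ζ)) • g' := by
          rw [hydef, hzdef]
          funext i
          simp only [Pi.sub_apply, Pi.smul_apply, smul_eq_mul]
          ring
        rw [← toE_sub, hfun, toE_smul]
      have h2 : ‖toE y - toE z‖ ≤ 4 * δ * Real.sqrt n := by
        rw [h1, norm_smul, norm_mul, Complex.norm_real, Real.norm_eq_abs,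
          abs_of_pos hsqnpos, hvnorm, mul_one]
        calc Real.sqrt n * ‖ξ - ζ‖ ≤ Real.sqrt n * (4 * δ) :=
              mul_le_mul_of_nonneg_left hξζ hsqnpos.le
          _ = 4 * δ * Real.sqrt n := by ring
      have h3 : ‖toE y - toE g‖ ≤ ‖toE y - toE z‖ + ‖toE z - toE g‖ := by
        have := norm_add_le (toE y - toE z) (toE z - toE g)
        rw [show (toE y - toE z) + (toE z - toE g) = toE y - toE g by abel] at this
        exact this
      rw [← hδdef] at h3
      have h4 : δ * 1 ≤ δ * Real.sqrt n := mul_le_mul_of_nonneg_left hsqn1 hδ0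
      calc ‖toE y - toE g‖ ≤ ‖toE y - toE z‖ + δ := h3
        _ ≤ 4 * δ * Real.sqrt n + δ * Real.sqrt n := by
            have := h2
            linarith
        _ = 5 * δ * Real.sqrt n := by ring
    have hentry : ∀ i, ‖ghat i - g i‖ ≤ 2 * ‖y i - g i‖ := by
      intro i
      rw [hout i]
      by_cases h : g' i = 0
      · have hyi : y i = 0 := by
          rw [hydef]
          simp [Pi.smul_apply, h]
        rw [hyi]
        have hpp : projC g' i = 1 := by
          unfold projC
          simp [h]
        rw [hpp, one_mul]
        calc ‖ξ - g i‖ ≤ ‖ξ‖ + ‖g i‖ := norm_sub_le _ _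
          _ = 2 := by rw [hξ1, hg1 i]; norm_num
          _ = 2 * ‖(0:ℂ) - g i‖ := by rw [zero_sub, norm_neg, hg1 i]; norm_num
      · have hyi : y i ≠ 0 := by
          rw [hydef]
          simp only [Pi.smul_apply, smul_eq_mul]
          apply mul_ne_zero
          apply mul_ne_zero
          · exact_mod_cast hsqnpos.ne'
          · rw [hξdef]; exact Complex.exp_ne_zero _
          · exact h
        have hnyi : ‖y i‖ = Real.sqrt n * ‖g' i‖ := by
          rw [hydef]
          simp only [Pi.smul_apply, smul_eq_mul, norm_mul, hξ1, Complex.norm_real,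
            Real.norm_eq_abs, abs_of_pos hsqnpos]
          ring
        have hproj : projC g' i * ξ = y i / ((‖y i‖:ℝ):ℂ) := by
          unfold projC
          simp only [h, if_false]
          rw [hnyi, hydef]
          simp only [Pi.smul_apply, smul_eq_mul]
          have hgne : ((‖g' i‖:ℝ):ℂ) ≠ 0 := by
            exact_mod_cast norm_ne_zero_iff.mpr h
          have hsne : ((Real.sqrt n:ℝ):ℂ) ≠ 0 := by
            exact_mod_cast hsqnpos.ne'
          rw [Complex.ofReal_mul]
          rw [show ((Real.sqrt n:ℝ):ℂ) * ξ * g' i = ((Real.sqrt n:ℝ):ℂ) * (ξ * g' i) by ring]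
          rw [mul_div_mul_left _ _ hsne]
          ring
        rw [hproj]
        exact circle_proj_lip (g i) (y i) (hg1 i) hyi
    have hfin : Real.sqrt (vecNormSq (ghat - g)) ≤ 2 * ‖toE y - toE g‖ := by
      have hsqv : vecNormSq (ghat - g) ≤ 4 * vecNormSq (y - g) := by
        unfold vecNormSq
        rw [Finset.mul_sum]
        refine Finset.sum_le_sum fun i _ => ?_
        have hei := hentry i
        rw [Pi.sub_apply, Pi.sub_apply]
        calc ‖ghat i - g i‖ ^ 2 ≤ (2 * ‖y i - g i‖) ^ 2 :=
              pow_le_pow_left₀ (norm_nonneg _) hei 2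
          _ = 4 * ‖y i - g i‖ ^ 2 := by ring
      have h2 : Real.sqrt (vecNormSq (ghat - g)) ≤ Real.sqrt (4 * vecNormSq (y - g)) :=
        Real.sqrt_le_sqrt hsqv
      rw [show (4:ℝ) * vecNormSq (y - g) = (2 * Real.sqrt (vecNormSq (y - g)))^2 by
        rw [mul_pow, Real.sq_sqrt (vecNormSq_nonneg _)]; ring] at h2
      rw [Real.sqrt_sq (by positivity)] at h2
      rw [sqrt_vecNormSq (y - g), toE_sub] at h2
      exact h2
    rw [le_div_iff₀ hs]
    have hchain : Real.sqrt (vecNormSq (ghat - g)) ≤ 10 * (δ * Real.sqrt n) := by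
      calc Real.sqrt (vecNormSq (ghat - g)) ≤ 2 * ‖toE y - toE g‖ := hfin
        _ ≤ 2 * (5 * δ * Real.sqrt n) := by linarith [hyg]
        _ = 10 * (δ * Real.sqrt n) := by ring
    have hVs := mul_le_mul_of_nonneg_right hchain hs.le
    have h10 : 10 * (δ * Real.sqrt n) * s ≤ 40 * εF := by
      calc 10 * (δ * Real.sqrt n) * s = 10 * (δ * (s * Real.sqrt n)) := by ring
        _ ≤ 10 * (4 * εF) := by linarith [hδeps]
        _ = 40 * εF := by ring
    linarith [hε0]

end SLS

/-- **Proposition 3.6 (Spectral local synchronization).** -/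
theorem spectral_local_sync :
    ∃ C : ℝ, 0 < C ∧
    ∀ (n T : ℕ) [NeZero n], 2 ≤ n → 1 ≤ T →
    ∀ (g : ℕ → Fin n → ℂ), (∀ k i, ‖g k i‖ = 1) → (∀ k, g k 0 = 1) →
    ∀ (Ghat : ℕ → Matrix (Fin n) (Fin n) ℂ) (s : ℕ → ℝ), (∀ k, 0 < s k) →
    ∀ (g' : ℕ → Fin n → ℂ) (lamx : ℕ → ℝ) (θ : ℕ → ℝ) (ghat : ℕ → Fin n → ℂ),
    (∀ k, SpectralSync (Ghat k) (g' k) (lamx k) (θ k) (ghat k)) →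
    (∀ k, k < T →
      Real.sqrt (vecNormSq (ghat k - g k))
        ≤ C * Real.sqrt (frobSq (Ghat k - (s k : ℂ) • GbarM (g k))) / s k) ∧
    (∑ k ∈ Finset.range T, vecNormSq (ghat k - g k)
      ≤ C ^ 2 / (⨅ k : Fin T, s k) ^ 2
          * ∑ k ∈ Finset.range T, frobSq (Ghat k - (s k : ℂ) • GbarM (g k))) := by
  refine ⟨100, by norm_num, ?_⟩
  intro n T _ hn hT g hg1 hg0 Ghat s hs g' lamx θ ghat hsync
  have hper : ∀ k, Real.sqrt (vecNormSq (ghat k - g k))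
      ≤ 100 * Real.sqrt (frobSq (Ghat k - (s k : ℂ) • GbarM (g k))) / s k :=
    fun k => SLS.key hn (g k) (hg1 k) (hg0 k) (Ghat k) (s k) (hs k) (g' k) (lamx k) (θ k)
      (ghat k) (hsync k)
  constructor
  · intro k _
    exact hper k
  · have hTpos : 0 < T := hT
    haveI : Nonempty (Fin T) := ⟨⟨0, hTpos⟩⟩
    set sm : ℝ := ⨅ k : Fin T, s k with hsm
    have hsmle : ∀ k : Fin T, sm ≤ s k := fun k =>
      ciInf_le (Finite.bddBelow_range _) k
    obtain ⟨k0, hk0⟩ := Finite.exists_min (fun k : Fin T => s (k : ℕ))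
    have h1 : s (k0 : ℕ) ≤ sm := le_ciInf fun k => hk0 k
    have hsmpos : 0 < sm := lt_of_lt_of_le (hs k0) h1
    rw [Finset.mul_sum]
    refine Finset.sum_le_sum fun k hk => ?_
    have hkT : k < T := Finset.mem_range.mp hk
    have hb := hper k
    have hF0 : 0 ≤ frobSq (Ghat k - (s k : ℂ) • GbarM (g k)) := SLS.frobSq_nonneg _
    have hV0 : 0 ≤ vecNormSq (ghat k - g k) := SLS.vecNormSq_nonneg _
    have hsk := hs k
    have hsmk : sm ≤ s k := hsmle ⟨k, hkT⟩
    set F : ℝ := frobSq (Ghat k - (s k : ℂ) • GbarM (g k)) with hF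
    have hh1 : vecNormSq (ghat k - g k) ≤ (100 * Real.sqrt F / s k) ^ 2 := by
      have := pow_le_pow_left₀ (Real.sqrt_nonneg _) hb 2
      rwa [Real.sq_sqrt hV0] at this
    have hh2 : (100 * Real.sqrt F / s k) ^ 2 = (100:ℝ) ^ 2 * F / (s k) ^ 2 := by
      rw [div_pow, mul_pow, Real.sq_sqrt hF0]
    have hh3 : (100:ℝ) ^ 2 * F / (s k) ^ 2 ≤ (100:ℝ) ^ 2 * F / sm ^ 2 := by
      apply div_le_div_of_nonneg_left (by positivity) (by positivity)
      nlinarith [hsmpos]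
    calc vecNormSq (ghat k - g k) ≤ (100 * Real.sqrt F / s k) ^ 2 := hh1
      _ = (100:ℝ) ^ 2 * F / (s k) ^ 2 := hh2
      _ ≤ (100:ℝ) ^ 2 * F / sm ^ 2 := hh3
      _ = (100:ℝ) ^ 2 / sm ^ 2 * F := by ring

end
end

section
/- (Equivalence of vector and matrix smoothness, equation (3.12)) Let n ≥ 2 and let g, h ∈ 𝒞_n with g₁ = h₁ = 1. Set G := g g^H and H := h h^H. Then 2‖g − h‖₂² ≤ ‖G − H‖_F² ≤ (2 + 4n)‖g − h‖₂². -/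
open scoped BigOperators
open MeasureTheory ProbabilityTheory Matrix

noncomputable section

/-- **Equation (3.12): equivalence of vector and matrix smoothness.** -/
theorem vector_matrix_smoothness_equiv {n : ℕ} [NeZero n] (hn : 2 ≤ n)
    (g h : Fin n → ℂ) (hg : ∀ i, ‖g i‖ = 1) (hh : ∀ i, ‖h i‖ = 1)
    (hg1 : g 0 = 1) (hh1 : h 0 = 1) :
    2 * vecNormSq (g - h) ≤ frobSq (outerH g - outerH h)
    ∧ frobSq (outerH g - outerH h) ≤ (2 + 4 * (n : ℝ)) * vecNormSq (g - h) := by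
  classical
  set s : ℂ := ∑ i, g i * star (h i) with hs
  have hgn : ∀ i, Complex.normSq (g i) = 1 := fun i => by
    rw [Complex.normSq_eq_norm_sq, hg]; norm_num
  have hhn : ∀ i, Complex.normSq (h i) = 1 := fun i => by
    rw [Complex.normSq_eq_norm_sq, hh]; norm_num
  have hA : vecNormSq (g - h) = 2 * n - 2 * s.re := by
    unfold vecNormSq
    have e : ∀ i, ‖(g - h) i‖ ^ 2 = 2 - 2 * (g i * star (h i)).re := by
      intro i
      rw [Pi.sub_apply, Complex.sq_norm, Complex.normSq_sub,
        hgn, hhn]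
      simp [Complex.star_def]
      ring
    rw [Finset.sum_congr rfl (fun i _ => e i)]
    rw [Finset.sum_sub_distrib, Finset.sum_const, ← Finset.mul_sum, ← Complex.re_sum]
    simp [hs, mul_comm]
  have hB : frobSq (outerH g - outerH h) = 2 * (n : ℝ) ^ 2 - 2 * Complex.normSq s := by
    unfold frobSq
    have e : ∀ i j : Fin n, ‖(outerH g - outerH h) i j‖ ^ 2
        = 2 - 2 * ((g i * star (h i)) * star (g j * star (h j))).re := by
      intro i j
      have happ : (outerH g - outerH h) i j = g i * star (g j) - h i * star (h j) := rfl
      have harg : g i * star (g j) * (starRingEnd ℂ) (h i * star (h j))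
          = g i * star (h i) * star (g j * star (h j)) := by
        simp only [← Complex.star_def, star_mul', star_star]
        ring
      rw [happ, Complex.sq_norm, Complex.normSq_sub, harg,
        Complex.normSq_mul, Complex.normSq_mul]
      simp only [Complex.star_def, Complex.normSq_conj, hgn, hhn]
      ring
    rw [Finset.sum_congr rfl (fun i _ => Finset.sum_congr rfl (fun j _ => e i j))]
    have hsum : (∑ i : Fin n, ∑ j : Fin n, ((g i * star (h i)) * star (g j * star (h j))).re)
        = Complex.normSq s := by
      have e2 : (∑ i : Fin n, ∑ j : Fin n, ((g i * star (h i)) * star (g j * star (h j))).re)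
          = (s * star s).re := by
        rw [hs, star_sum, Finset.sum_mul, Complex.re_sum]
        refine Finset.sum_congr rfl fun i _ => ?_
        rw [Finset.mul_sum, Complex.re_sum]
      rw [e2, Complex.star_def, Complex.mul_conj]
      simp
    have eline : ∀ i : Fin n, (∑ j : Fin n,
        (2 - 2 * ((g i * star (h i)) * star (g j * star (h j))).re))
        = 2 * n - 2 * ∑ j : Fin n, ((g i * star (h i)) * star (g j * star (h j))).re := by
      intro i
      rw [Finset.sum_sub_distrib, Finset.sum_const, ← Finset.mul_sum]
      simp [mul_comm]
    rw [Finset.sum_congr rfl (fun i _ => eline i), Finset.sum_sub_distrib,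
      Finset.sum_const, ← Finset.mul_sum, hsum]
    simp
    ring
  have hsabs : ‖s‖ ≤ n := by
    calc ‖s‖ ≤ ∑ i, ‖g i * star (h i)‖ := norm_sum_le _ _
    _ = n := by simp [norm_mul, hg, hh]
  have hz0 : g 0 * star (h 0) = 1 := by rw [hg1, hh1]; simp
  have hsplit : s = 1 + ∑ i ∈ Finset.univ.erase 0, g i * star (h i) := by
    rw [hs, ← Finset.add_sum_erase _ _ (Finset.mem_univ (0 : Fin n)), hz0]
  have ht : ‖s - 1‖ ≤ (n : ℝ) - 1 := by
    have : s - 1 = ∑ i ∈ Finset.univ.erase 0, g i * star (h i) := by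
      rw [hsplit]; ring
    rw [this]
    calc ‖∑ i ∈ Finset.univ.erase 0, g i * star (h i)‖
        ≤ ∑ i ∈ Finset.univ.erase 0, ‖g i * star (h i)‖ := norm_sum_le _ _
      _ = (n : ℝ) - 1 := by
          simp [norm_mul, hg, hh, Finset.card_erase_of_mem]
          rw [Nat.cast_sub (by omega : 1 ≤ n)]
          simp
  have hdecomp : Complex.normSq s = ‖s - 1‖ ^ 2 + 2 * s.re - 1 := by
    have : s = (s - 1) + 1 := by ring
    rw [this, Complex.normSq_add]
    rw [Complex.sq_norm]
    simp [Complex.sub_re]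
    ring
  have hre : s.re ≤ ‖s‖ := Complex.re_le_norm s
  have hnsq : Complex.normSq s = ‖s‖ ^ 2 := by
    rw [Complex.normSq_eq_norm_sq]
  have h0 : (0:ℝ) ≤ ‖s‖ := norm_nonneg s
  have h0t : (0:ℝ) ≤ ‖s - 1‖ := norm_nonneg _
  have hn2 : (2:ℝ) ≤ n := by exact_mod_cast hn
  constructor
  · rw [hA, hB, hdecomp]
    nlinarith [mul_self_le_mul_self h0t ht]
  · rw [hA, hB, hnsq]
    nlinarith [sq_nonneg ((n:ℝ) - ‖s‖),
      mul_nonneg (by linarith : (0:ℝ) ≤ 2*(n:ℝ)) (by linarith : (0:ℝ) ≤ ‖s‖ - s.re),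
      mul_nonneg (by linarith : (0:ℝ) ≤ 2 + 2*(n:ℝ)) (by linarith : (0:ℝ) ≤ (n:ℝ) - s.re)]

end
end

section
/- (Davis–Kahan consequence, equation (3.30)) Let n ≥ 2, g ∈ 𝒞_n and s > 0, and set B := s(g g^H − I_n). Let Ĝ' ∈ ℂ^{n×n} be Hermitian and let ĝ' ∈ ℂ^n be a unit ℓ₂-norm eigenvector of Ĝ' associated with its largest eigenvalue. Then there exists φ ∈ [0,2π) such that ‖ĝ' − e^{iφ} g/√n‖₂ ≤ 8 ‖Ĝ' − B‖_F/(s n). -/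
open scoped BigOperators
open MeasureTheory ProbabilityTheory Matrix

noncomputable section

namespace DKaux

open Complex Matrix

variable {n : ℕ}

lemma vecNormSq_nonneg (x : Fin n → ℂ) : 0 ≤ vecNormSq x :=
  Finset.sum_nonneg fun _ _ => sq_nonneg _

lemma ip_self (x : Fin n → ℂ) :
    ∑ i, (starRingEnd ℂ) (x i) * x i = ((vecNormSq x : ℝ) : ℂ) := by
  rw [vecNormSq, Complex.ofReal_sum]
  refine Finset.sum_congr rfl fun i _ => ?_
  rw [mul_comm, Complex.mul_conj', Complex.ofReal_pow]

lemma ip_abs_le (x y : Fin n → ℂ) :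
    ‖∑ i, (starRingEnd ℂ) (x i) * y i‖ ≤
      Real.sqrt (vecNormSq x) * Real.sqrt (vecNormSq y) := by
  calc ‖∑ i, (starRingEnd ℂ) (x i) * y i‖ ≤ ∑ i, ‖(starRingEnd ℂ) (x i) * y i‖ :=
        norm_sum_le _ _
    _ = ∑ i, ‖x i‖ * ‖y i‖ := by simp [norm_mul]
    _ ≤ _ := by
        simpa [vecNormSq] using
          Real.sum_mul_le_sqrt_mul_sqrt Finset.univ (fun i => ‖x i‖) (fun i => ‖y i‖)

lemma vecNormSq_mulVec_le (M : Matrix (Fin n) (Fin n) ℂ) (x : Fin n → ℂ) :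
    vecNormSq (M *ᵥ x) ≤ frobSq M * vecNormSq x := by
  rw [vecNormSq, frobSq, Finset.sum_mul]
  refine Finset.sum_le_sum fun i _ => ?_
  have h1 : ‖(M *ᵥ x) i‖ ≤ Real.sqrt (∑ j, ‖M i j‖ ^ 2) * Real.sqrt (∑ j, ‖x j‖ ^ 2) := by
    calc ‖(M *ᵥ x) i‖ = ‖∑ j, M i j * x j‖ := by rfl
      _ ≤ ∑ j, ‖M i j * x j‖ := norm_sum_le _ _
      _ = ∑ j, ‖M i j‖ * ‖x j‖ := by simp [norm_mul]
      _ ≤ _ := by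
          simpa using Real.sum_mul_le_sqrt_mul_sqrt Finset.univ
            (fun j => ‖M i j‖) (fun j => ‖x j‖)
  have h2 : 0 ≤ Real.sqrt (∑ j, ‖M i j‖ ^ 2) * Real.sqrt (∑ j, ‖x j‖ ^ 2) := by positivity
  calc ‖(M *ᵥ x) i‖ ^ 2 ≤ (Real.sqrt (∑ j, ‖M i j‖ ^ 2) * Real.sqrt (∑ j, ‖x j‖ ^ 2)) ^ 2 := by
        exact pow_le_pow_left₀ (norm_nonneg _) h1 2
    _ = (∑ j, ‖M i j‖ ^ 2) * vecNormSq x := by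
        rw [mul_pow, Real.sq_sqrt (by positivity), Real.sq_sqrt (by positivity)]; rfl

lemma vecNormSq_sub_mul (x y : Fin n → ℂ) (e : ℂ) :
    vecNormSq (x - fun i => e * y i)
      = vecNormSq x + Complex.normSq e * vecNormSq y
        - 2 * ((starRingEnd ℂ) e * ∑ i, x i * (starRingEnd ℂ) (y i)).re := by
  have h0 : ∀ z : ℂ, ‖z‖ ^ 2 = Complex.normSq z := fun z => by
    rw [Complex.sq_norm]
  have key : ∀ i : Fin n, ‖x i - e * y i‖ ^ 2
      = ‖x i‖ ^ 2 + Complex.normSq e * ‖y i‖ ^ 2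
        - 2 * ((starRingEnd ℂ) e * (x i * (starRingEnd ℂ) (y i))).re := by
    intro i
    have h1 : x i * (starRingEnd ℂ) (e * y i)
        = (starRingEnd ℂ) e * (x i * (starRingEnd ℂ) (y i)) := by
      rw [_root_.map_mul]; ring
    rw [h0, h0, h0, Complex.normSq_sub, Complex.normSq_mul, h1]
  simp only [vecNormSq, Pi.sub_apply, key]
  rw [Finset.sum_sub_distrib, Finset.sum_add_distrib, ← Finset.mul_sum,
    ← Finset.mul_sum, ← Complex.re_sum, ← Finset.mul_sum]

lemma rayleigh_le (G' : Matrix (Fin n) (Fin n) ℂ) (hG' : G'.IsHermitian) (lam : ℝ)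
    (hmax : ∀ (ν : ℝ) (w : Fin n → ℂ), w ≠ 0 → G' *ᵥ w = (ν : ℂ) • w → ν ≤ lam)
    (u : Fin n → ℂ) (hu : vecNormSq u = 1) :
    (∑ i, (starRingEnd ℂ) (u i) * (G' *ᵥ u) i).re ≤ lam := by
  classical
  have hev : ∀ i, hG'.eigenvalues i ≤ lam := by
    intro i
    refine hmax _ (⇑(hG'.eigenvectorBasis i)) ?_ ?_
    · intro h
      have h1 : ‖hG'.eigenvectorBasis i‖ = 1 := hG'.eigenvectorBasis.orthonormal.1 i
      rw [EuclideanSpace.norm_eq] at h1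
      have h2 : ∀ x, hG'.eigenvectorBasis i x = 0 := fun x => congrFun h x
      simp only [h2] at h1
      norm_num at h1
    · have h2 := hG'.mulVec_eigenvectorBasis i
      rw [h2]
      funext j
      simp [Complex.real_smul]
  set U : Matrix (Fin n) (Fin n) ℂ := (hG'.eigenvectorUnitary : Matrix (Fin n) (Fin n) ℂ)
    with hU
  set D : Matrix (Fin n) (Fin n) ℂ :=
    Matrix.diagonal (RCLike.ofReal ∘ hG'.eigenvalues) with hD
  set y : Fin n → ℂ := star U *ᵥ u with hy
  have hUU : U * star U = 1 := (Matrix.mem_unitaryGroup_iff).mp hG'.eigenvectorUnitary.2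
  have hyu : star y = star u ᵥ* U := by
    rw [hy, Matrix.star_mulVec, Matrix.star_eq_conjTranspose,
      Matrix.conjTranspose_conjTranspose]
  have key1 : star u ⬝ᵥ (G' *ᵥ u) = star y ⬝ᵥ (D *ᵥ y) := by
    conv_lhs => rw [hG'.spectral_theorem, Unitary.conjStarAlgAut_apply]
    rw [← Matrix.mulVec_mulVec, ← Matrix.mulVec_mulVec, Matrix.dotProduct_mulVec, ← hyu]
  have key2 : star y ⬝ᵥ y = star u ⬝ᵥ u := by
    rw [hyu, ← Matrix.dotProduct_mulVec, hy, Matrix.mulVec_mulVec, hUU, Matrix.one_mulVec]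
  have hDy : star y ⬝ᵥ (D *ᵥ y)
      = ((∑ i, hG'.eigenvalues i * Complex.normSq (y i) : ℝ) : ℂ) := by
    rw [Complex.ofReal_sum]
    simp only [dotProduct, hD, Matrix.mulVec_diagonal, Pi.star_apply]
    refine Finset.sum_congr rfl fun i _ => ?_
    have h3 : ((RCLike.ofReal ∘ hG'.eigenvalues) i : ℂ) = ((hG'.eigenvalues i : ℝ) : ℂ) := rfl
    rw [h3, Complex.ofReal_mul, Complex.normSq_eq_conj_mul_self, Complex.star_def]
    ring
  have hyy : star y ⬝ᵥ y = ((∑ i, Complex.normSq (y i) : ℝ) : ℂ) := by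
    rw [Complex.ofReal_sum]
    simp only [dotProduct, Pi.star_apply]
    refine Finset.sum_congr rfl fun i _ => ?_
    rw [Complex.normSq_eq_conj_mul_self, Complex.star_def]
  have huu : star u ⬝ᵥ u = ((vecNormSq u : ℝ) : ℂ) := by
    simpa only [dotProduct, Pi.star_apply, Complex.star_def] using ip_self u
  have hsum1 : (∑ i, Complex.normSq (y i) : ℝ) = 1 := by
    have := key2
    rw [hyy, huu, hu] at this
    exact_mod_cast this
  have hstart : (∑ i, (starRingEnd ℂ) (u i) * (G' *ᵥ u) i) = star u ⬝ᵥ (G' *ᵥ u) := by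
    simp only [dotProduct, Pi.star_apply, Complex.star_def]
  rw [hstart, key1, hDy, Complex.ofReal_re]
  calc (∑ i, hG'.eigenvalues i * Complex.normSq (y i))
      ≤ ∑ i, lam * Complex.normSq (y i) :=
        Finset.sum_le_sum fun i _ =>
          mul_le_mul_of_nonneg_right (hev i) (Complex.normSq_nonneg _)
    _ = lam := by rw [← Finset.mul_sum, hsum1, mul_one]

end DKaux

open Complex DKaux

set_option maxHeartbeats 1000000

/-- **Equation (3.30): a Davis–Kahan consequence.** -/
theorem davis_kahan_consequence {n : ℕ} (hn : 2 ≤ n)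
    (g : Fin n → ℂ) (hg : ∀ i, ‖g i‖ = 1) (s : ℝ) (hs : 0 < s)
    (G' : Matrix (Fin n) (Fin n) ℂ) (hG' : G'.IsHermitian)
    (g' : Fin n → ℂ) (hunit : vecNormSq g' = 1) (lam : ℝ)
    (heig : G' *ᵥ g' = (lam : ℂ) • g')
    (hmax : ∀ (ν : ℝ) (w : Fin n → ℂ), w ≠ 0 → G' *ᵥ w = (ν : ℂ) • w → ν ≤ lam) :
    ∃ φ : ℝ, 0 ≤ φ ∧ φ < 2 * Real.pi ∧
      Real.sqrt (vecNormSq (g' - fun i =>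
          Complex.exp ((φ : ℂ) * Complex.I) * g i / ((Real.sqrt n : ℝ) : ℂ)))
        ≤ 8 * Real.sqrt (frobSq (G' - (s : ℂ) • GbarM g)) / (s * n) := by
  classical
  have hn0 : (0:ℝ) < (n:ℝ) := by exact_mod_cast Nat.lt_of_lt_of_le Nat.zero_lt_two hn
  set rn : ℝ := Real.sqrt (n:ℝ) with hrn_def
  have hrn : 0 < rn := Real.sqrt_pos.mpr hn0
  have hrn2 : rn ^ 2 = (n:ℝ) := Real.sq_sqrt hn0.le
  have hrn2C : ((rn:ℂ)) * (rn:ℂ) = ((n:ℝ):ℂ) := by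
    rw [← Complex.ofReal_mul]; exact_mod_cast congrArg Complex.ofReal (by nlinarith : rn * rn = (n:ℝ))
  set u : Fin n → ℂ := fun i => g i / (rn : ℂ) with hu_def
  have hrnC0 : ((rn:ℝ):ℂ) ≠ 0 := by exact_mod_cast Complex.ofReal_ne_zero.mpr hrn.ne'
  have hgu : ∀ i, g i = (rn:ℂ) * u i := by
    intro i; rw [hu_def]; field_simp
  have hunorm : ∀ i, ‖u i‖ = 1 / rn := by
    intro i
    rw [hu_def]
    simp [norm_div, hg i, Complex.norm_real, abs_of_pos hrn]
  have hvu : vecNormSq u = 1 := by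
    simp only [vecNormSq, hunorm, div_pow, one_pow]
    rw [Finset.sum_const, Finset.card_univ, Fintype.card_fin, nsmul_eq_mul]
    field_simp
    nlinarith
  set c : ℂ := ∑ i, (starRingEnd ℂ) (u i) * g' i with hc_def
  -- the error matrix
  set E : Matrix (Fin n) (Fin n) ℂ := G' - (s : ℂ) • GbarM g with hE_def
  set Δ : ℝ := Real.sqrt (frobSq E) with hΔ_def
  have hΔ0 : 0 ≤ Δ := Real.sqrt_nonneg _
  -- action of the rank-one part
  have hB : ∀ (x : Fin n → ℂ) (i : Fin n), (((s:ℂ) • GbarM g) *ᵥ x) i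
      = (s:ℂ) * (g i * (∑ j, (starRingEnd ℂ) (g j) * x j) - x i) := by
    intro x i
    simp only [Matrix.smul_mulVec, Pi.smul_apply, smul_eq_mul]
    congr 1
    simp only [GbarM, outerH, Matrix.mulVec, dotProduct, Matrix.sub_apply,
      Matrix.one_apply, sub_mul, Finset.sum_sub_distrib, Finset.mul_sum]
    congr 1
    · exact Finset.sum_congr rfl fun j _ => by rw [Complex.star_def]; ring
    · simp [Finset.sum_ite_eq' Finset.univ i x]
  have hsum_gx : ∀ (x : Fin n → ℂ),
      (∑ j, (starRingEnd ℂ) (g j) * x j) = (rn:ℂ) * ∑ j, (starRingEnd ℂ) (u j) * x j := by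
    intro x
    rw [Finset.mul_sum]
    refine Finset.sum_congr rfl fun j _ => ?_
    rw [hgu j, _root_.map_mul, Complex.conj_ofReal]; ring
  have hipuu : (∑ i, (starRingEnd ℂ) (u i) * u i) = 1 := by
    rw [ip_self u, hvu]; norm_num
  -- E action on g'
  have hEg' : ∀ i, (E *ᵥ g') i = ((lam:ℂ) + (s:ℂ)) * g' i - (s:ℂ) * ((n:ℝ):ℂ) * c * u i := by
    intro i
    rw [hE_def, Matrix.sub_mulVec]
    simp only [Pi.sub_apply, heig, Pi.smul_apply, smul_eq_mul, hB g' i]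
    rw [hsum_gx g', ← hc_def, hgu i]
    linear_combination (-(s:ℂ)) * c * u i * hrn2C
  -- E action on u
  have hEu : ∀ i, (G' *ᵥ u) i = (E *ᵥ u) i + (s:ℂ) * (((n:ℝ):ℂ) - 1) * u i := by
    intro i
    rw [hE_def, Matrix.sub_mulVec]
    simp only [Pi.sub_apply, hB u i]
    rw [hsum_gx u, hipuu, hgu i]
    linear_combination (s:ℂ) * u i * hrn2C
  -- Rayleigh lower bound on lam
  have hRay := rayleigh_le G' hG' lam hmax u hvu
  have hTbound : ‖∑ i, (starRingEnd ℂ) (u i) * (E *ᵥ u) i‖ ≤ Δ := by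
    calc ‖∑ i, (starRingEnd ℂ) (u i) * (E *ᵥ u) i‖
        ≤ Real.sqrt (vecNormSq u) * Real.sqrt (vecNormSq (E *ᵥ u)) := ip_abs_le _ _
      _ ≤ 1 * Real.sqrt (frobSq E * 1) := by
          rw [hvu, Real.sqrt_one]
          refine mul_le_mul_of_nonneg_left (Real.sqrt_le_sqrt ?_) zero_le_one
          calc vecNormSq (E *ᵥ u) ≤ frobSq E * vecNormSq u := vecNormSq_mulVec_le E u
            _ = frobSq E * 1 := by rw [hvu]
      _ = Δ := by rw [mul_one, one_mul, hΔ_def]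
  have hsplit : (∑ i, (starRingEnd ℂ) (u i) * (G' *ᵥ u) i)
      = (∑ i, (starRingEnd ℂ) (u i) * (E *ᵥ u) i) + (s:ℂ) * (((n:ℝ):ℂ) - 1) := by
    calc (∑ i, (starRingEnd ℂ) (u i) * (G' *ᵥ u) i)
        = ∑ i, ((starRingEnd ℂ) (u i) * (E *ᵥ u) i
            + (s:ℂ) * (((n:ℝ):ℂ) - 1) * ((starRingEnd ℂ) (u i) * u i)) := by
          refine Finset.sum_congr rfl fun i _ => ?_
          rw [hEu i]; ring
      _ = (∑ i, (starRingEnd ℂ) (u i) * (E *ᵥ u) i)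
            + (s:ℂ) * (((n:ℝ):ℂ) - 1) * (∑ i, (starRingEnd ℂ) (u i) * u i) := by
          rw [Finset.sum_add_distrib, ← Finset.mul_sum]
      _ = _ := by rw [hipuu, mul_one]
  have hlam : s * (n:ℝ) - Δ ≤ lam + s := by
    have h1 : (∑ i, (starRingEnd ℂ) (u i) * (G' *ᵥ u) i).re
        = (∑ i, (starRingEnd ℂ) (u i) * (E *ᵥ u) i).re + s * ((n:ℝ) - 1) := by
      rw [hsplit, Complex.add_re]
      congr 1
      have : (s:ℂ) * (((n:ℝ):ℂ) - 1) = ((s * ((n:ℝ)-1) : ℝ) : ℂ) := by push_cast; ring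
      rw [this, Complex.ofReal_re]
    have h2 : -Δ ≤ (∑ i, (starRingEnd ℂ) (u i) * (E *ᵥ u) i).re := by
      have h3 : |(∑ i, (starRingEnd ℂ) (u i) * (E *ᵥ u) i).re|
          ≤ ‖∑ i, (starRingEnd ℂ) (u i) * (E *ᵥ u) i‖ := by
        exact Complex.abs_re_le_norm _
      have h4 := neg_abs_le ((∑ i, (starRingEnd ℂ) (u i) * (E *ᵥ u) i).re)
      linarith [hTbound]
    linarith [hRay]
  -- properties of w = g' - c·u
  have hcomm : (∑ i, g' i * (starRingEnd ℂ) (u i)) = c := by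
    rw [hc_def]; exact Finset.sum_congr rfl fun i _ => mul_comm _ _
  have hvw : vecNormSq (g' - fun i => c * u i) = 1 - Complex.normSq c := by
    rw [vecNormSq_sub_mul, hunit, hvu, hcomm, ← Complex.normSq_eq_conj_mul_self,
      Complex.ofReal_re]
    ring
  have hx0 : 0 ≤ 1 - Complex.normSq c := by rw [← hvw]; exact vecNormSq_nonneg _
  have hipuw : (∑ i, (starRingEnd ℂ) (u i) * (g' i - c * u i)) = 0 := by
    simp only [mul_sub]
    rw [Finset.sum_sub_distrib]
    have h5 : (∑ i, (starRingEnd ℂ) (u i) * (c * u i))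
        = c * ∑ i, (starRingEnd ℂ) (u i) * u i := by
      rw [Finset.mul_sum]; exact Finset.sum_congr rfl fun i _ => by ring
    rw [h5, hipuu, mul_one, ← hc_def, sub_self]
  have hipwu : (∑ i, (starRingEnd ℂ) (g' i - c * u i) * u i) = 0 := by
    have h6 := congrArg (starRingEnd ℂ) hipuw
    rw [map_sum, map_zero] at h6
    refine Eq.trans ?_ h6
    refine Finset.sum_congr rfl fun i _ => ?_
    rw [_root_.map_mul, Complex.conj_conj]; ring
  -- key identity: ⟨w, E g'⟩ = (λ+s)(1-|c|²)
  have hkey : (∑ i, (starRingEnd ℂ) (g' i - c * u i) * (E *ᵥ g') i)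
      = (((lam + s) * (1 - Complex.normSq c) : ℝ) : ℂ) := by
    calc (∑ i, (starRingEnd ℂ) (g' i - c * u i) * (E *ᵥ g') i)
        = ((lam:ℂ)+(s:ℂ)) * (∑ i, (starRingEnd ℂ) (g' i - c * u i) * g' i)
            - (s:ℂ)*((n:ℝ):ℂ)*c * (∑ i, (starRingEnd ℂ) (g' i - c * u i) * u i) := by
          rw [Finset.mul_sum, Finset.mul_sum, ← Finset.sum_sub_distrib]
          refine Finset.sum_congr rfl fun i _ => ?_
          rw [hEg' i]; ring
      _ = ((lam:ℂ)+(s:ℂ)) * ((1 - Complex.normSq c : ℝ):ℂ) := by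
          rw [hipwu, mul_zero, sub_zero]
          congr 1
          calc (∑ i, (starRingEnd ℂ) (g' i - c * u i) * g' i)
              = (∑ i, (starRingEnd ℂ) (g' i - c * u i) * (g' i - c * u i))
                  + c * (∑ i, (starRingEnd ℂ) (g' i - c * u i) * u i) := by
                rw [Finset.mul_sum, ← Finset.sum_add_distrib]
                refine Finset.sum_congr rfl fun i _ => by ring
            _ = ((vecNormSq (g' - fun i => c * u i) : ℝ) : ℂ) := by
                rw [hipwu, mul_zero, add_zero, ← ip_self (g' - fun i => c * u i)]
                exact Finset.sum_congr rfl fun i _ => by simp [Pi.sub_apply]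
            _ = _ := by rw [hvw]
      _ = _ := by push_cast; ring
  have hEgbound : Real.sqrt (vecNormSq (E *ᵥ g')) ≤ Δ := by
    rw [hΔ_def]
    refine Real.sqrt_le_sqrt ?_
    calc vecNormSq (E *ᵥ g') ≤ frobSq E * vecNormSq g' := vecNormSq_mulVec_le E g'
      _ = frobSq E := by rw [hunit, mul_one]
  have hmain : (lam + s) * (1 - Complex.normSq c)
      ≤ Real.sqrt (1 - Complex.normSq c) * Δ := by
    have h1 : ((lam + s) * (1 - Complex.normSq c))
        = (∑ i, (starRingEnd ℂ) (g' i - c * u i) * (E *ᵥ g') i).re := by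
      rw [hkey, Complex.ofReal_re]
    rw [h1]
    have h2 : (∑ i, (starRingEnd ℂ) (g' i - c * u i) * (E *ᵥ g') i).re
        ≤ ‖∑ i, (starRingEnd ℂ) (g' i - c * u i) * (E *ᵥ g') i‖ := by
      exact Complex.re_le_norm _
    have h3 : ‖∑ i, (starRingEnd ℂ) ((g' - fun i => c * u i) i) * (E *ᵥ g') i‖
        ≤ Real.sqrt (vecNormSq (g' - fun i => c * u i)) * Real.sqrt (vecNormSq (E *ᵥ g')) :=
      ip_abs_le _ _
    simp only [Pi.sub_apply] at h3
    refine le_trans h2 (le_trans h3 ?_)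
    rw [hvw]
    exact mul_le_mul_of_nonneg_left hEgbound (Real.sqrt_nonneg _)
  -- choice of phase
  set φ0 : ℝ := Complex.arg c with hφ0_def
  have hφ0_le : φ0 ≤ Real.pi := Complex.arg_le_pi c
  have hφ0_gt : -Real.pi < φ0 := Complex.neg_pi_lt_arg c
  have hpi : 0 < Real.pi := Real.pi_pos
  refine ⟨if φ0 < 0 then φ0 + 2*Real.pi else φ0, ?_, ?_, ?_⟩
  · split_ifs with h
    · linarith
    · linarith
  · split_ifs with h
    · linarith
    · linarith
  · have hexp : Complex.exp ((((if φ0 < 0 then φ0 + 2*Real.pi else φ0) : ℝ):ℂ) * Complex.I)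
        = Complex.exp ((φ0:ℂ) * Complex.I) := by
      split_ifs with h
      · push_cast
        rw [show ((φ0:ℂ) + 2*(Real.pi:ℂ)) * Complex.I
            = (φ0:ℂ)*Complex.I + 2*(Real.pi:ℂ)*Complex.I from by ring,
          Complex.exp_add, Complex.exp_two_pi_mul_I, mul_one]
      · rfl
    have hfun : (fun i => Complex.exp
          ((((if φ0 < 0 then φ0 + 2*Real.pi else φ0) : ℝ):ℂ) * Complex.I) * g i / ((rn:ℝ):ℂ))
        = fun i => Complex.exp ((φ0:ℂ) * Complex.I) * u i := by
      funext i
      rw [hexp, hu_def, mul_div_assoc]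
    rw [hfun]
    have habs_e : Complex.normSq (Complex.exp ((φ0:ℂ) * Complex.I)) = 1 := by
      rw [Complex.normSq_eq_norm_sq, Complex.norm_exp_ofReal_mul_I]; norm_num
    have hce : (starRingEnd ℂ) (Complex.exp ((φ0:ℂ) * Complex.I)) * c
        = ((‖c‖ : ℝ) : ℂ) := by
      have h1 : (starRingEnd ℂ) (Complex.exp ((φ0:ℂ) * Complex.I))
          = Complex.exp (-((φ0:ℂ) * Complex.I)) := by
        rw [← Complex.exp_conj]
        congr 1
        rw [_root_.map_mul, Complex.conj_ofReal, Complex.conj_I]; ring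
      rw [h1]
      conv_lhs => rw [← Complex.norm_mul_exp_arg_mul_I c]
      rw [← hφ0_def]
      calc Complex.exp (-((φ0:ℂ)*Complex.I))
            * ((‖c‖ :ℂ) * Complex.exp ((φ0:ℂ)*Complex.I))
          = (‖c‖ :ℂ) * Complex.exp (-((φ0:ℂ)*Complex.I) + (φ0:ℂ)*Complex.I) := by
            rw [Complex.exp_add]; ring
        _ = (‖c‖ :ℂ) := by simp
    have hnorm_eq : vecNormSq (g' - fun i => Complex.exp ((φ0:ℂ)*Complex.I) * u i)
        = 2 - 2 * ‖c‖ := by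
      rw [vecNormSq_sub_mul, hunit, habs_e, hvu, hcomm, hce, Complex.ofReal_re]
      ring
    rw [hnorm_eq]
    -- final case analysis
    by_cases hcase : s * (n:ℝ) ≤ 2*Δ
    · have h4 : (4:ℝ) ≤ 8*Δ/(s*(n:ℝ)) := by
        rw [le_div_iff₀ (by positivity)]
        nlinarith
      have h2' : Real.sqrt (2 - 2*‖c‖) ≤ 2 := by
        have h5 : 2 - 2*‖c‖ ≤ 4 := by
          nlinarith [norm_nonneg c]
        calc Real.sqrt (2 - 2*‖c‖) ≤ Real.sqrt 4 := Real.sqrt_le_sqrt h5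
          _ = 2 := by
            rw [show (4:ℝ) = 2^2 by norm_num, Real.sqrt_sq (by norm_num : (0:ℝ) ≤ 2)]
      linarith
    · push_neg at hcase
      have habs_c : ‖c‖ ≤ 1 := by
        have h := ip_abs_le u g'
        rw [hvu, hunit, Real.sqrt_one, mul_one, ← hc_def] at h
        exact h
      set x : ℝ := 1 - Complex.normSq c with hx_def
      set t : ℝ := Real.sqrt x with ht_def
      have ht0 : 0 ≤ t := Real.sqrt_nonneg _
      have ht2 : t^2 = x := Real.sq_sqrt hx0
      have hx1 : x ≤ 1 := by
        rw [hx_def]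
        nlinarith [Complex.normSq_nonneg c]
      have ht1 : t ≤ 1 := by nlinarith [ht2, ht0, hx1]
      have hlam2 : (s*(n:ℝ) - Δ) * x ≤ t * Δ :=
        le_trans (mul_le_mul_of_nonneg_right (by linarith) hx0) hmain
      have hsn : 0 < s * (n:ℝ) := by positivity
      have hst : t * (s*(n:ℝ)) ≤ 2*Δ := by
        rcases eq_or_lt_of_le ht0 with h|h
        · rw [← h]; nlinarith
        · have h8 : (s*(n:ℝ) - Δ) * t ≤ Δ := by nlinarith [hlam2, ht2]
          nlinarith [h8, mul_le_mul_of_nonneg_right ht1 hΔ0]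
      have hfin : 2 - 2*‖c‖ ≤ (8*Δ/(s*(n:ℝ)))^2 := by
        have h5 : Complex.normSq c = ‖c‖ ^ 2 := Complex.normSq_eq_norm_sq c
        have h6 : 1 - ‖c‖ ≤ x := by
          rw [hx_def, h5]
          nlinarith [norm_nonneg c]
        have h7 : x * (s*(n:ℝ))^2 ≤ 4*Δ^2 := by nlinarith [hst, ht2, ht0]
        rw [div_pow, ← sub_nonneg]
        have h9 : (8*Δ)^2/(s*(n:ℝ))^2 - (2 - 2*‖c‖)
            = ((8*Δ)^2 - (2 - 2*‖c‖)*(s*(n:ℝ))^2)/(s*(n:ℝ))^2 := by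
          field_simp
        rw [h9]
        refine div_nonneg ?_ (by positivity)
        nlinarith [h6, h7]
      calc Real.sqrt (2 - 2*‖c‖) ≤ Real.sqrt ((8*Δ/(s*(n:ℝ)))^2) :=
            Real.sqrt_le_sqrt hfin
        _ = 8*Δ/(s*(n:ℝ)) := Real.sqrt_sq (by positivity)


end
end

section
/- (Bound on the sub-Gaussian norm of a centered Bernoulli) For every p ∈ (0, 1/4], the quantity Q(p) := √( (1 − 2p)/(4 log((1−p)/p)) ) satisfies Q(p) ≤ 1/√(2 log(1/p)); equivalently, (1 − 2p)/(4 log((1−p)/p)) ≤ 1/(2 log(1/p)). -/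
open scoped BigOperators
open MeasureTheory ProbabilityTheory Matrix

noncomputable section

/-- **Bound on the sub-Gaussian norm of a centered Bernoulli.** -/
theorem centered_bernoulli_subgaussian_bound (p : ℝ) (hp : 0 < p) (hp4 : p ≤ 1 / 4) :
    Real.sqrt ((1 - 2 * p) / (4 * Real.log ((1 - p) / p)))
      ≤ 1 / Real.sqrt (2 * Real.log (1 / p))
    ∧ (1 - 2 * p) / (4 * Real.log ((1 - p) / p)) ≤ 1 / (2 * Real.log (1 / p)) := by
  have hp1 : p < 1 := lt_of_le_of_lt hp4 (by norm_num)
  have h1p : (0:ℝ) < 1 - p := by linarith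
  have h34 : (3:ℝ)/4 ≤ 1 - p := by linarith
  -- log p ≤ -4/3
  have hlog2 : (0.6931471803 : ℝ) < Real.log 2 := Real.log_two_gt_d9
  have hlogp : Real.log p ≤ -(4/3) := by
    have : Real.log p ≤ Real.log (1/4) := Real.log_le_log hp hp4
    have h4 : Real.log (1/4 : ℝ) = -(2 * Real.log 2) := by
      rw [Real.log_div one_ne_zero (by norm_num), Real.log_one]
      rw [show (4:ℝ) = 2^2 by norm_num, Real.log_pow]
      push_cast; ring
    nlinarith
  -- log (1-p) ≥ -p/(1-p) ≥ -4p/3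
  have hlog1p : -(4/3) * p ≤ Real.log (1 - p) := by
    have h := Real.log_le_sub_one_of_pos (x := (1-p)⁻¹) (by positivity)
    rw [Real.log_inv] at h
    have hinv : (1-p)⁻¹ ≤ 4/3 := by
      rw [inv_le_comm₀ (by linarith) (by norm_num)]; linarith
    have hmul : (1-p)*(1-p)⁻¹ = 1 := mul_inv_cancel₀ (ne_of_gt h1p)
    nlinarith [mul_le_mul_of_nonneg_left hinv hp.le]
  -- key: (1+2p) log p ≤ 2 log(1-p)
  have hkey : (1 + 2*p) * Real.log p ≤ 2 * Real.log (1 - p) := by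
    have h1 : (1 + 2*p) * Real.log p ≤ (1 + 2*p) * (-(4/3)) := by
      apply mul_le_mul_of_nonneg_left hlogp (by linarith)
    nlinarith
  have hLpos : 0 < Real.log ((1 - p) / p) := by
    apply Real.log_pos
    rw [lt_div_iff₀ hp]; linarith
  have hMpos : 0 < Real.log (1 / p) := by
    apply Real.log_pos
    rw [lt_div_iff₀ hp]; linarith
  have hL : Real.log ((1 - p) / p) = Real.log (1 - p) - Real.log p :=
    Real.log_div (by linarith) (ne_of_gt hp)
  have hM : Real.log (1 / p) = -Real.log p := by
    rw [one_div, Real.log_inv]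
  have hmain : (1 - 2 * p) / (4 * Real.log ((1 - p) / p)) ≤ 1 / (2 * Real.log (1 / p)) := by
    rw [div_le_div_iff₀ (by positivity) (by positivity), hL, hM]
    nlinarith
  refine ⟨?_, hmain⟩
  have := Real.sqrt_le_sqrt hmain
  calc Real.sqrt ((1 - 2 * p) / (4 * Real.log ((1 - p) / p)))
      ≤ Real.sqrt (1 / (2 * Real.log (1 / p))) := this
    _ = 1 / Real.sqrt (2 * Real.log (1 / p)) := by
        rw [one_div, Real.sqrt_inv, inv_eq_one_div]

end
end
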